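/- arXiv:1405.5477 — 6 statements merged into one kernel-verified Lean document; each statement's English description precedes it below -/
import Mathlib

section
/- For every integer n ≥ 1, the polynomial identity ∏_{i=1}^{n−1} (i+1 + q(n−i)) = Σ_{T ∈ 𝒜_n} ∏_{v internal vertex of T} (2 + q(h_v − 1)) holds, where the sum is over all André trees on n vertices. -/
/-!
Call a parent map `p : Fin m → Fin m` with `i ≤ p i` and at most two children per vertex a
forest; its roots are the fixed points. Weigh a forest with `r` roots by
`∏_v hookWeight q h_v` times the falling factorial `(x)_{r-1}`, and let `F_m(x)` be the total.
Deleting the top vertex `m` of a forest on `m + 1` vertices leaves a forest on `m` vertices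
together with the set `C` of at most two of its roots that were children of `m`; all other hooks
are unchanged and the hook of `m` is `1 + ∑_{c ∈ C} h_c`. Summing over `C` (using
`∑_c h_c = m` over all roots) gives `F_{m+1}(x) = (x + 2 + q m) F_m(x + 1)`, hence a product
formula for `F_m`. At `x = 0` the falling factorial kills every forest with more than one root,
and the forests with a single root are exactly the André trees.
-/

open scoped Classical

noncomputable section

def IsAndreTree (n : ℕ) (p : Fin n → Fin n) : Prop :=
  (∀ i : Fin n, (i : ℕ) + 1 < n → (i : ℕ) < (p i : ℕ)) ∧
  (∀ i : Fin n, ¬ (i : ℕ) + 1 < n → p i = i) ∧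
  ∀ j : Fin n, (Finset.univ.filter fun i : Fin n => (i : ℕ) + 1 < n ∧ p i = j).card ≤ 2

def andreTrees (n : ℕ) : Finset (Fin n → Fin n) :=
  Finset.univ.filter (IsAndreTree n)

def hookA (n : ℕ) (p : Fin n → Fin n) (v : Fin n) : ℕ :=
  (Finset.univ.filter fun w : Fin n => ∃ k < n, p^[k] w = v).card

def internalsA (n : ℕ) (p : Fin n → Fin n) : Finset (Fin n) :=
  Finset.univ.filter fun v => 1 < hookA n p v

end

open Finset

namespace AndreForest

variable {m : ℕ}

noncomputable section

def children (p : Fin m → Fin m) (j : Fin m) : Finset (Fin m) :=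
  univ.filter fun i => p i = j ∧ i ≠ j

def roots (p : Fin m → Fin m) : Finset (Fin m) :=
  univ.filter fun i => p i = i

def IsForest (p : Fin m → Fin m) : Prop :=
  (∀ i, i ≤ p i) ∧ ∀ j, #(children p j) ≤ 2

def forests (m : ℕ) : Finset (Fin m → Fin m) :=
  univ.filter IsForest

def subtree (p : Fin m → Fin m) (v : Fin m) : Finset (Fin m) :=
  univ.filter fun w => ∃ k, p^[k] w = v

end

lemma _root_.Function.iterate_eq_of_le {α : Type*} {f : α → α} {x : α} {i k : ℕ}
    (hfix : f (f^[i] x) = f^[i] x) (hik : i ≤ k) : f^[k] x = f^[i] x := by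
  obtain ⟨j, rfl⟩ := Nat.exists_eq_add_of_le hik
  rw [add_comm, Function.iterate_add_apply, Function.iterate_fixed hfix]

section Inflationary

variable {p : Fin m → Fin m}

lemma exists_lt_iterate_fixed (hp : ∀ i, i ≤ p i) (w : Fin m) :
    ∃ i < m, p (p^[i] w) = p^[i] w := by
  by_contra! hmove
  have hgrow : ∀ i ≤ m, i ≤ (p^[i] w : ℕ) := by
    intro i
    induction i with
    | zero => simp
    | succ i ih =>
      intro hi
      have hlt : p^[i] w < p (p^[i] w) := (hp _).lt_of_ne (hmove i hi).symm
      rw [Function.iterate_succ_apply']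
      have := ih (by omega)
      rw [Fin.lt_def] at hlt
      omega
  have := hgrow m le_rfl
  have := (p^[m] w).isLt
  omega

lemma mem_subtree_iff (hp : ∀ i, i ≤ p i) {v w : Fin m} :
    w ∈ subtree p v ↔ ∃ k < m, p^[k] w = v := by
  simp only [subtree, mem_filter, mem_univ, true_and]
  refine ⟨fun ⟨k, hk⟩ => ?_, fun ⟨k, _, hk⟩ => ⟨k, hk⟩⟩
  obtain ⟨i, him, hfix⟩ := exists_lt_iterate_fixed hp w
  rcases le_total k i with hki | hik
  · exact ⟨k, by omega, hk⟩
  · exact ⟨i, him, (Function.iterate_eq_of_le hfix hik).symm.trans hk⟩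

lemma hookA_eq_card_subtree (hp : ∀ i, i ≤ p i) (v : Fin m) :
    hookA m p v = #(subtree p v) := by
  rw [hookA]
  congr 1
  ext w
  rw [mem_subtree_iff hp, mem_filter, and_iff_right (mem_univ w)]

lemma mem_subtree_iterate (p : Fin m → Fin m) (w : Fin m) (k : ℕ) : w ∈ subtree p (p^[k] w) :=
  mem_filter.2 ⟨mem_univ w, k, rfl⟩

lemma iterate_card_mem_roots (hp : ∀ i, i ≤ p i) (w : Fin m) : p^[m] w ∈ roots p := by
  obtain ⟨i, him, hfix⟩ := exists_lt_iterate_fixed hp w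
  rw [roots, mem_filter, Function.iterate_eq_of_le hfix him.le]
  exact ⟨mem_univ _, hfix⟩

lemma mem_subtree_iff_of_mem_roots (hp : ∀ i, i ≤ p i) {c w : Fin m} (hc : c ∈ roots p) :
    w ∈ subtree p c ↔ p^[m] w = c := by
  refine ⟨fun hw => ?_, fun hw => mem_filter.2 ⟨mem_univ w, m, hw⟩⟩
  obtain ⟨k, hk, rfl⟩ := (mem_subtree_iff hp).1 hw
  exact Function.iterate_eq_of_le (mem_filter.1 hc).2 hk.le

lemma sum_hookA_eq_card (hp : ∀ i, i ≤ p i) {C : Finset (Fin m)} (hC : C ⊆ roots p) :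
    ∑ c ∈ C, hookA m p c = #{w | p^[m] w ∈ C} := by
  have hmaps : (({w | p^[m] w ∈ C} : Finset (Fin m)) : Set (Fin m)).MapsTo (p^[m]) C :=
    fun w hw => (mem_filter.1 hw).2
  rw [card_eq_sum_card_fiberwise hmaps]
  refine sum_congr rfl fun c hc => ?_
  rw [hookA_eq_card_subtree hp, filter_filter]
  congr 1
  ext w
  rw [mem_subtree_iff_of_mem_roots hp (hC hc), mem_filter, and_iff_right (mem_univ w)]
  constructor
  · rintro rfl; exact ⟨hc, rfl⟩
  · exact And.right

lemma sum_hookA_roots (hp : ∀ i, i ≤ p i) : ∑ c ∈ roots p, hookA m p c = m := by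
  rw [sum_hookA_eq_card hp subset_rfl, filter_true_of_mem fun w _ => iterate_card_mem_roots hp w,
    card_univ, Fintype.card_fin]

lemma roots_nonempty (hp : ∀ i, i ≤ p i) (hm : m ≠ 0) : (roots p).Nonempty :=
  ⟨_, iterate_card_mem_roots hp ⟨0, Nat.pos_of_ne_zero hm⟩⟩

end Inflationary


noncomputable section

def graft (p : Fin m → Fin m) (C : Finset (Fin m)) : Fin (m + 1) → Fin (m + 1) :=
  Fin.lastCases (Fin.last m) fun j => if j ∈ C then Fin.last m else (p j).castSucc

def prune (p : Fin (m + 1) → Fin (m + 1)) : Fin m → Fin m :=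
  fun i => Fin.lastCases (motive := fun _ => Fin m) i id (p i.castSucc)

def lastChildren (p : Fin (m + 1) → Fin (m + 1)) : Finset (Fin m) :=
  univ.filter fun i => p i.castSucc = Fin.last m

end

section Graft

variable {p : Fin m → Fin m} {C : Finset (Fin m)}

@[simp] lemma graft_last : graft p C (Fin.last m) = Fin.last m :=
  Fin.lastCases_last

@[simp] lemma graft_castSucc (j : Fin m) :
    graft p C j.castSucc = if j ∈ C then Fin.last m else (p j).castSucc :=
  Fin.lastCases_castSucc _

lemma graft_le (hp : ∀ i, i ≤ p i) (i : Fin (m + 1)) : i ≤ graft p C i := by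
  induction i using Fin.lastCases with
  | last => simp
  | cast j =>
    rw [graft_castSucc]
    split_ifs
    · exact Fin.le_last _
    · exact Fin.castSucc_le_castSucc_iff.2 (hp j)

lemma children_graft_last : children (graft p C) (Fin.last m) = C.map Fin.castSuccEmb := by
  ext i
  induction i using Fin.lastCases with
  | last => simp [children]
  | cast j => by_cases hj : j ∈ C <;> simp [children, hj, Fin.castSucc_ne_last]

lemma children_graft_castSucc (hC : C ⊆ roots p) (j : Fin m) :
    children (graft p C) j.castSucc = (children p j).map Fin.castSuccEmb := by
  ext i
  induction i using Fin.lastCases with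
  | last => simp [children, (Fin.castSucc_ne_last j).symm]
  | cast i =>
    by_cases hi : i ∈ C
    · have hfix : p i = i := (mem_filter.1 (hC hi)).2
      simp [children, hi, hfix, (Fin.castSucc_ne_last j).symm]
    · simp [children, hi]

lemma roots_graft :
    roots (graft p C) = cons (Fin.last m) ((roots p \ C).map Fin.castSuccEmb) (by simp) := by
  ext i
  induction i using Fin.lastCases with
  | last => simp [roots]
  | cast i => by_cases hi : i ∈ C <;> simp [roots, hi, (Fin.castSucc_ne_last i).symm]

lemma card_roots_graft (hC : C ⊆ roots p) :
    #(roots (graft p C)) = #(roots p) - #C + 1 := by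
  rw [roots_graft, card_cons, card_map, card_sdiff_of_subset hC]

lemma graft_mem_forests (hp : p ∈ forests m) (hC : C ⊆ roots p) (hC2 : #C ≤ 2) :
    graft p C ∈ forests (m + 1) := by
  obtain ⟨hle, hch⟩ := (mem_filter.1 hp).2
  refine mem_filter.2 ⟨mem_univ _, graft_le hle, fun j => ?_⟩
  induction j using Fin.lastCases with
  | last => rwa [children_graft_last, card_map]
  | cast j => rw [children_graft_castSucc hC, card_map]; exact hch j

lemma prune_graft (hC : C ⊆ roots p) : prune (graft p C) = p := by
  funext i
  by_cases hi : i ∈ C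
  · simp [prune, hi, (mem_filter.1 (hC hi)).2]
  · simp [prune, hi]

lemma lastChildren_graft : lastChildren (graft p C) = C := by
  ext i
  by_cases hi : i ∈ C <;> simp [lastChildren, hi, Fin.castSucc_ne_last]

end Graft

section Prune

variable {p : Fin (m + 1) → Fin (m + 1)}

lemma lastChildren_subset_roots_prune : lastChildren p ⊆ roots (prune p) := by
  intro i hi
  simp only [lastChildren, mem_filter, mem_univ, true_and] at hi
  exact mem_filter.2 ⟨mem_univ i, by simp [prune, hi]⟩

lemma graft_prune (hlast : p (Fin.last m) = Fin.last m) :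
    graft (prune p) (lastChildren p) = p := by
  funext i
  induction i using Fin.lastCases with
  | last => rw [graft_last, hlast]
  | cast i =>
    rw [graft_castSucc]
    induction hpi : p i.castSucc using Fin.lastCases with
    | last => simp [lastChildren, hpi]
    | cast j => simp [lastChildren, prune, hpi, Fin.castSucc_ne_last]

lemma last_fixed_of_le (hp : ∀ i, i ≤ p i) : p (Fin.last m) = Fin.last m :=
  Fin.last_le_iff.1 (hp _)

lemma prune_mem_forests (hp : p ∈ forests (m + 1)) : prune p ∈ forests m := by
  obtain ⟨hle, hch⟩ := (mem_filter.1 hp).2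
  have hgraft := graft_prune (last_fixed_of_le hle)
  refine mem_filter.2 ⟨mem_univ _, fun i => ?_, fun j => ?_⟩
  · have := hle i.castSucc
    induction hpi : p i.castSucc using Fin.lastCases with
    | last => simp [prune, hpi]
    | cast j => simpa [prune, hpi] using this
  · have := hch j.castSucc
    rwa [← hgraft, children_graft_castSucc lastChildren_subset_roots_prune, card_map] at this

lemma card_lastChildren_le (hp : p ∈ forests (m + 1)) : #(lastChildren p) ≤ 2 := by
  have := (mem_filter.1 hp).2.2 (Fin.last m)
  rwa [← graft_prune (last_fixed_of_le (mem_filter.1 hp).2.1), children_graft_last, card_map] at this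

end Prune

lemma sum_forests_succ (F : (Fin (m + 1) → Fin (m + 1)) → ℚ) :
    ∑ p ∈ forests (m + 1), F p =
      ∑ p ∈ forests m, ∑ C ∈ (roots p).powerset with #C ≤ 2, F (graft p C) := by
  rw [sum_sigma']
  refine sum_bij' (fun p _ => ⟨prune p, lastChildren p⟩) (fun s _ => graft s.1 s.2)
    (fun p hp => ?_) (fun s hs => ?_) (fun p hp => ?_) (fun s hs => ?_) (fun p hp => ?_)
  · simp only [mem_sigma, mem_filter, mem_powerset]
    exact ⟨prune_mem_forests hp, lastChildren_subset_roots_prune, card_lastChildren_le hp⟩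
  · simp only [mem_sigma, mem_filter, mem_powerset] at hs
    exact graft_mem_forests hs.1 hs.2.1 hs.2.2
  · exact graft_prune (last_fixed_of_le (mem_filter.1 hp).2.1)
  · simp only [mem_sigma, mem_filter, mem_powerset] at hs
    rw [prune_graft hs.2.1, lastChildren_graft]
  · rw [graft_prune (last_fixed_of_le (mem_filter.1 hp).2.1)]

section GraftSubtree

variable {p : Fin m → Fin m} {C : Finset (Fin m)}

lemma graft_iterate_succ_castSucc (hC : C ⊆ roots p) (w : Fin m) (k : ℕ) :
    (graft p C)^[k + 1] w.castSucc = graft p C (p^[k] w).castSucc := by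
  induction k with
  | zero => rfl
  | succ k ih =>
    rw [Function.iterate_succ_apply', ih]
    by_cases hk : p^[k] w ∈ C
    · have hfix : p (p^[k] w) = p^[k] w := (mem_filter.1 (hC hk)).2
      rw [Function.iterate_succ_apply', hfix]
      simp [hk]
    · simp [hk, Function.iterate_succ_apply']

lemma castSucc_mem_subtree_graft_iff (hC : C ⊆ roots p) {v w : Fin m} :
    w.castSucc ∈ subtree (graft p C) v.castSucc ↔ w ∈ subtree p v := by
  simp only [subtree, mem_filter, mem_univ, true_and]
  constructor
  · rintro ⟨k, hk⟩
    cases k with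
    | zero => exact ⟨0, Fin.castSucc_injective m hk⟩
    | succ k =>
      rw [graft_iterate_succ_castSucc hC, graft_castSucc] at hk
      split_ifs at hk with h
      · exact absurd hk.symm (Fin.castSucc_ne_last v)
      · exact ⟨k + 1, by rw [Function.iterate_succ_apply']; exact Fin.castSucc_injective m hk⟩
  · rintro ⟨k, rfl⟩
    induction k with
    | zero => exact ⟨0, rfl⟩
    | succ k ih =>
      by_cases hk : p^[k] w ∈ C
      · rwa [Function.iterate_succ_apply', (mem_filter.1 (hC hk)).2]
      · refine ⟨k + 1, ?_⟩
        rw [graft_iterate_succ_castSucc hC, graft_castSucc, if_neg hk,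
          Function.iterate_succ_apply']

lemma last_mem_subtree_graft_iff {v : Fin (m + 1)} :
    Fin.last m ∈ subtree (graft p C) v ↔ v = Fin.last m := by
  simp only [subtree, mem_filter, mem_univ, true_and,
    Function.iterate_fixed (graft_last (p := p) (C := C))]
  exact ⟨fun ⟨_, h⟩ => h.symm, fun h => ⟨0, h.symm⟩⟩

lemma castSucc_mem_subtree_graft_last_iff (hp : ∀ i, i ≤ p i) (hC : C ⊆ roots p) {w : Fin m} :
    w.castSucc ∈ subtree (graft p C) (Fin.last m) ↔ p^[m] w ∈ C := by
  constructor
  · intro hw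
    obtain ⟨k, hk⟩ := (mem_filter.1 hw).2
    cases k with
    | zero => exact absurd hk (Fin.castSucc_ne_last w)
    | succ k =>
      rw [graft_iterate_succ_castSucc hC, graft_castSucc] at hk
      split_ifs at hk with h
      · rwa [(mem_subtree_iff_of_mem_roots hp (hC h)).1 (mem_subtree_iterate p w k)]
      · exact absurd hk (Fin.castSucc_ne_last _)
  · intro hw
    obtain ⟨k, hk⟩ := (mem_filter.1 <| (castSucc_mem_subtree_graft_iff hC).2
      ((mem_subtree_iff_of_mem_roots hp (hC hw)).2 rfl)).2
    refine mem_filter.2 ⟨mem_univ _, k + 1, ?_⟩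
    rw [Function.iterate_succ_apply', hk, graft_castSucc, if_pos hw]

lemma hookA_graft_castSucc (hp : ∀ i, i ≤ p i) (hC : C ⊆ roots p) (v : Fin m) :
    hookA (m + 1) (graft p C) v.castSucc = hookA m p v := by
  rw [hookA_eq_card_subtree (graft_le hp), hookA_eq_card_subtree hp,
    ← card_map Fin.castSuccEmb (s := subtree p v)]
  congr 1
  ext w
  induction w using Fin.lastCases with
  | last => simp [last_mem_subtree_graft_iff, Fin.castSucc_ne_last]
  | cast w => simp [castSucc_mem_subtree_graft_iff hC]

lemma hookA_graft_last (hp : ∀ i, i ≤ p i) (hC : C ⊆ roots p) :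
    hookA (m + 1) (graft p C) (Fin.last m) = ∑ c ∈ C, hookA m p c + 1 := by
  rw [hookA_eq_card_subtree (graft_le hp), sum_hookA_eq_card hp hC,
    ← card_map Fin.castSuccEmb (s := {w | p^[m] w ∈ C}), ← card_cons (a := Fin.last m) (by simp)]
  congr 1
  ext w
  induction w using Fin.lastCases with
  | last => simp [last_mem_subtree_graft_iff]
  | cast w => simp [castSucc_mem_subtree_graft_last_iff hp hC, Fin.castSucc_ne_last]

end GraftSubtree

lemma sum_powersetCard_two_sum_add {α : Type*} [DecidableEq α] (s : Finset α) (f : α → ℚ) :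
    ∑ C ∈ s.powersetCard 2, ∑ c ∈ C, f c + ∑ c ∈ s, f c = #s * ∑ c ∈ s, f c := by
  induction s using Finset.induction_on with
  | empty => simp [show powersetCard 2 (∅ : Finset α) = ∅ from rfl]
  | insert a s ha ih =>
    have hdisj : Disjoint (s.powersetCard 2) ((s.powersetCard 1).image (insert a)) := by
      simp only [disjoint_left, mem_image, mem_powersetCard]
      rintro C ⟨hCs, -⟩ ⟨D, -, rfl⟩
      exact ha (hCs (mem_insert_self a D))
    have hinj : Set.InjOn (insert a) (s.powersetCard 1 : Set (Finset α)) := fun D hD D' hD' h => by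
      have hD : a ∉ D := fun h => ha ((mem_powersetCard.1 hD).1 h)
      have hD' : a ∉ D' := fun h => ha ((mem_powersetCard.1 hD').1 h)
      rw [← erase_insert hD, ← erase_insert hD', h]
    rw [powersetCard_succ_insert ha, sum_union hdisj, sum_image hinj, powersetCard_one, sum_map,
      sum_insert ha, card_insert_of_notMem ha]
    have hpair : ∀ b ∈ s, ∑ c ∈ insert a {b}, f c = f a + f b := fun b hb =>
      sum_pair fun hab => ha (hab ▸ hb)
    simp only [Function.Embedding.coeFn_mk]
    rw [sum_congr rfl hpair, sum_add_distrib, sum_const, nsmul_eq_mul]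
    push_cast
    linear_combination ih

lemma descPochhammer_eval_add_one_succ (x : ℚ) (r : ℕ) :
    (descPochhammer ℚ (r + 1)).eval (x + 1) = (x + 1) * (descPochhammer ℚ r).eval x := by
  simp [descPochhammer_succ_left]

-- For `r = 0` the last coefficient vanishes, so the truncated `r - 1` is harmless.
lemma descPochhammer_three_term (x a : ℚ) (r : ℕ) :
    (descPochhammer ℚ (r + 1)).eval x + (2 * (r + 1) + a) * (descPochhammer ℚ r).eval x
      + ((r + 1) * r + r * a) * (descPochhammer ℚ (r - 1)).eval x
      = (x + 2 + a) * (descPochhammer ℚ r).eval (x + 1) := by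
  cases r with
  | zero => simp; ring
  | succ r =>
    rw [descPochhammer_eval_add_one_succ, Nat.add_sub_cancel]
    simp only [descPochhammer_succ_eval]
    push_cast
    ring

def hookWeight (q : ℚ) (h : ℕ) : ℚ :=
  if 1 < h then 2 + q * (h - 1) else 1

lemma hookWeight_add_one_of_pos (q : ℚ) {h : ℕ} (hh : 0 < h) :
    hookWeight q (h + 1) = 2 + q * h := by
  rw [hookWeight, if_pos (by omega)]
  push_cast
  ring

noncomputable def weight (q : ℚ) (p : Fin m → Fin m) : ℚ :=
  ∏ v, hookWeight q (hookA m p v)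

lemma weight_eq_prod_internalsA (q : ℚ) (p : Fin m → Fin m) :
    weight q p = ∏ v ∈ internalsA m p, (2 + q * ((hookA m p v : ℚ) - 1)) := by
  rw [weight, internalsA, prod_filter]
  rfl

lemma weight_graft (q : ℚ) {p : Fin m → Fin m} {C : Finset (Fin m)} (hp : ∀ i, i ≤ p i)
    (hC : C ⊆ roots p) :
    weight q (graft p C) = weight q p * hookWeight q (∑ c ∈ C, hookA m p c + 1) := by
  simp only [weight, Fin.prod_univ_castSucc, hookA_graft_castSucc hp hC, hookA_graft_last hp hC]

lemma sum_powerset_filter_card_le_two {α β : Type*} [DecidableEq α] [AddCommMonoid β]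
    (s : Finset α) (F : Finset α → β) :
    ∑ C ∈ s.powerset with #C ≤ 2, F C =
      F ∅ + ∑ C ∈ s.powersetCard 1, F C + ∑ C ∈ s.powersetCard 2, F C := by
  have hcard : ∀ C ∈ {C ∈ s.powerset | #C ≤ 2}, #C ∈ range 3 := fun C hC =>
    mem_range.2 (Nat.lt_succ_of_le (mem_filter.1 hC).2)
  have hfiber : ∀ k < 3, {C ∈ s.powerset | #C ≤ 2 ∧ #C = k} = s.powersetCard k := fun k hk => by
    rw [powersetCard_eq_filter]
    exact filter_congr fun C _ => ⟨And.right, fun hC => ⟨by omega, hC⟩⟩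
  rw [← sum_fiberwise_of_maps_to hcard, sum_range_succ, sum_range_succ, sum_range_one]
  simp only [filter_filter]
  rw [hfiber 0 (by norm_num), hfiber 1 (by norm_num), hfiber 2 (by norm_num), powersetCard_zero,
    sum_singleton]

lemma sum_powerset_card_le_two (q x : ℚ) {α : Type*} [DecidableEq α] {s : Finset α} {r : ℕ}
    (hs : #s = r + 1) (h : α → ℕ) (hpos : ∀ c ∈ s, 0 < h c) :
    ∑ C ∈ s.powerset with #C ≤ 2,
        hookWeight q (∑ c ∈ C, h c + 1) * (descPochhammer ℚ (r + 1 - #C)).eval x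
      = (x + 2 + q * ∑ c ∈ s, (h c : ℚ)) * (descPochhammer ℚ r).eval (x + 1) := by
  have hone : ∑ C ∈ s.powersetCard 1,
      hookWeight q (∑ c ∈ C, h c + 1) * (descPochhammer ℚ (r + 1 - #C)).eval x =
        (2 * (r + 1) + q * ∑ c ∈ s, (h c : ℚ)) * (descPochhammer ℚ r).eval x := by
    rw [powersetCard_one, sum_map]
    simp only [Function.Embedding.coeFn_mk, card_singleton, Nat.add_sub_cancel, sum_singleton]
    rw [← sum_mul, sum_congr rfl fun c hc => hookWeight_add_one_of_pos q (hpos c hc),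
      sum_add_distrib, sum_const, hs, ← mul_sum, nsmul_eq_mul]
    push_cast
    ring
  have htwo : ∑ C ∈ s.powersetCard 2,
      hookWeight q (∑ c ∈ C, h c + 1) * (descPochhammer ℚ (r + 1 - #C)).eval x =
        ((r + 1) * r + r * (q * ∑ c ∈ s, (h c : ℚ))) * (descPochhammer ℚ (r - 1)).eval x := by
    have hterm : ∀ C ∈ s.powersetCard 2,
        hookWeight q (∑ c ∈ C, h c + 1) * (descPochhammer ℚ (r + 1 - #C)).eval x =
          (2 + q * ∑ c ∈ C, (h c : ℚ)) * (descPochhammer ℚ (r - 1)).eval x := fun C hC => by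
      obtain ⟨hCs, hC2⟩ := mem_powersetCard.1 hC
      have hsum : 0 < ∑ c ∈ C, h c := sum_pos (fun c hc => hpos c (hCs hc)) (card_pos.1 (by omega))
      rw [hookWeight_add_one_of_pos q hsum, Nat.cast_sum, hC2]
      rfl
    have hpairs := sum_powersetCard_two_sum_add s (fun c => (h c : ℚ))
    rw [hs] at hpairs
    rw [sum_congr rfl hterm, ← sum_mul, sum_add_distrib, sum_const, card_powersetCard, hs,
      ← mul_sum, nsmul_eq_mul, Nat.cast_choose_two]
    push_cast at hpairs ⊢
    congr 1
    linear_combination q * hpairs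
  rw [sum_powerset_filter_card_le_two, hone, htwo, ← descPochhammer_three_term]
  simp [hookWeight]

noncomputable def forestPoly (q : ℚ) (m : ℕ) (x : ℚ) : ℚ :=
  ∑ p ∈ forests m, weight q p * (descPochhammer ℚ (#(roots p) - 1)).eval x

lemma forestPoly_succ (q x : ℚ) (hm : m ≠ 0) :
    forestPoly q (m + 1) x = (x + 2 + q * m) * forestPoly q m (x + 1) := by
  rw [forestPoly, sum_forests_succ, forestPoly, mul_sum]
  refine sum_congr rfl fun p hp => ?_
  have hle : ∀ i, i ≤ p i := (mem_filter.1 hp).2.1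
  obtain ⟨r, hr⟩ : ∃ r, #(roots p) = r + 1 :=
    Nat.exists_eq_add_one.2 (card_pos.2 (roots_nonempty hle hm))
  have hterm : ∀ C ∈ {C ∈ (roots p).powerset | #C ≤ 2},
      weight q (graft p C) * (descPochhammer ℚ (#(roots (graft p C)) - 1)).eval x =
        weight q p * (hookWeight q (∑ c ∈ C, hookA m p c + 1) *
          (descPochhammer ℚ (r + 1 - #C)).eval x) := fun C hC => by
    have hCs := mem_powerset.1 (mem_filter.1 hC).1
    rw [weight_graft q hle hCs, card_roots_graft hCs, hr, Nat.add_sub_cancel, mul_assoc]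
  have hpos : ∀ c ∈ roots p, 0 < hookA m p c := fun c _ => by
    rw [hookA_eq_card_subtree hle]
    exact card_pos.2 ⟨c, mem_subtree_iterate p c 0⟩
  rw [sum_congr rfl hterm, ← mul_sum, sum_powerset_card_le_two q x hr _ hpos, ← Nat.cast_sum,
    sum_hookA_roots hle, hr, Nat.add_sub_cancel]
  ring

lemma forestPoly_one (q x : ℚ) : forestPoly q 1 x = 1 := by
  have hforests : forests 1 = {id} := by
    refine eq_singleton_iff_unique_mem.2 ⟨mem_filter.2 ⟨mem_univ _, fun _ => le_rfl, fun j => ?_⟩,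
      fun p _ => funext fun i => Subsingleton.elim _ _⟩
    exact (card_le_univ _).trans (by simp)
  have hhook : hookA 1 id 0 = 1 := (card_le_univ _).antisymm
    (card_pos.2 ⟨0, mem_filter.2 ⟨mem_univ _, 0, one_pos, rfl⟩⟩)
  simp [forestPoly, hforests, weight, hookWeight, hhook, roots]

lemma forestPoly_eq_prod (q : ℚ) (k : ℕ) (x : ℚ) :
    forestPoly q (k + 1) x = ∏ i ∈ range k, (x + 2 + i + q * (k - i)) := by
  induction k generalizing x with
  | zero => exact forestPoly_one q x
  | succ k ih =>
    rw [forestPoly_succ q x k.succ_ne_zero, ih, prod_range_succ', mul_comm]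
    push_cast
    congr 1
    · refine prod_congr rfl fun i _ => ?_
      ring
    · ring

lemma val_add_one_lt_iff_ne_last {k : ℕ} {i : Fin (k + 1)} :
    (i : ℕ) + 1 < k + 1 ↔ i ≠ Fin.last k := by
  rw [Ne, Fin.ext_iff, Fin.val_last]
  omega

lemma children_eq_filter_of_fixed_iff {k : ℕ} {p : Fin (k + 1) → Fin (k + 1)}
    (hfix : ∀ i, p i = i ↔ i = Fin.last k) (j : Fin (k + 1)) :
    children p j = univ.filter fun i : Fin (k + 1) => (i : ℕ) + 1 < k + 1 ∧ p i = j := by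
  ext i
  simp only [children, mem_filter, mem_univ, true_and, val_add_one_lt_iff_ne_last]
  constructor
  · rintro ⟨rfl, h⟩
    exact ⟨fun hi => h ((hfix i).2 hi).symm, rfl⟩
  · rintro ⟨h, rfl⟩
    exact ⟨rfl, fun hi => h ((hfix i).1 hi.symm)⟩

lemma isAndreTree_iff {k : ℕ} {p : Fin (k + 1) → Fin (k + 1)} :
    IsAndreTree (k + 1) p ↔ IsForest p ∧ #(roots p) ≤ 1 := by
  constructor
  · rintro ⟨hlt, hroot, hch⟩
    have hfix : ∀ i, p i = i ↔ i = Fin.last k := fun i => by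
      by_cases hi : i = Fin.last k
      · exact ⟨fun _ => hi, fun _ => hroot i (mt val_add_one_lt_iff_ne_last.1 (not_not.2 hi))⟩
      · have := hlt i (val_add_one_lt_iff_ne_last.2 hi)
        exact ⟨fun h => absurd (h ▸ this) (lt_irrefl _), fun h => absurd h hi⟩
    refine ⟨⟨fun i => ?_, fun j => ?_⟩, ?_⟩
    · by_cases hi : i = Fin.last k
      · exact ((hfix i).2 hi).ge
      · exact (Fin.lt_def.2 (hlt i (val_add_one_lt_iff_ne_last.2 hi))).le
    · rw [children_eq_filter_of_fixed_iff hfix]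
      exact hch j
    · refine card_le_one.2 fun a ha b hb => ?_
      exact ((hfix a).1 (mem_filter.1 ha).2).trans ((hfix b).1 (mem_filter.1 hb).2).symm
  · rintro ⟨⟨hle, hch⟩, hcard⟩
    have hlast : p (Fin.last k) = Fin.last k := last_fixed_of_le hle
    have hfix : ∀ i, p i = i ↔ i = Fin.last k := fun i =>
      ⟨fun h => card_le_one.1 hcard i (mem_filter.2 ⟨mem_univ _, h⟩) _
        (mem_filter.2 ⟨mem_univ _, hlast⟩), fun h => h ▸ hlast⟩
    refine ⟨fun i hi => ?_, fun i hi => ?_, fun j => ?_⟩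
    · exact Fin.lt_def.1 ((hle i).lt_of_ne fun h =>
        val_add_one_lt_iff_ne_last.1 hi ((hfix i).1 h.symm))
    · exact (hfix i).2 (not_not.1 (mt val_add_one_lt_iff_ne_last.2 hi))
    · rw [← children_eq_filter_of_fixed_iff hfix]
      exact hch j

lemma andreTrees_eq_filter (k : ℕ) :
    andreTrees (k + 1) = (forests (k + 1)).filter fun p => #(roots p) ≤ 1 := by
  ext p
  simp [andreTrees, forests, isAndreTree_iff]

lemma forestPoly_zero (q : ℚ) (k : ℕ) :
    forestPoly q (k + 1) 0 = ∑ p ∈ andreTrees (k + 1), weight q p := by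
  rw [forestPoly, andreTrees_eq_filter, sum_filter]
  refine sum_congr rfl fun p _ => ?_
  by_cases h : #(roots p) ≤ 1
  · simp [h, Nat.sub_eq_zero_of_le h]
  · simp [h, show #(roots p) - 1 ≠ 0 by omega]

end AndreForest

/-- `∏_{i=1}^{n-1} (i + 1 + q(n - i)) = Σ_{T ∈ 𝒜_n} ∏_{v internal} (2 + q(h_v - 1))`,
the sum being over all André trees on `n` vertices. -/
theorem stmt3 (n : ℕ) (hn : 1 ≤ n) (q : ℚ) :
    ∏ i ∈ Finset.Icc 1 (n - 1), ((i : ℚ) + 1 + q * ((n : ℚ) - (i : ℚ)))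
      = ∑ p ∈ andreTrees n, ∏ v ∈ internalsA n p,
          (2 + q * ((hookA n p v : ℚ) - 1)) := by
  obtain ⟨k, rfl⟩ := Nat.exists_eq_add_of_le' hn
  calc _ = ∏ i ∈ range k, ((0 : ℚ) + 2 + i + q * (k - i)) := by
        rw [Nat.add_sub_cancel, ← Finset.Ico_add_one_right_eq_Icc, prod_Ico_eq_prod_range,
          Nat.add_sub_cancel]
        refine prod_congr rfl fun i _ => ?_
        push_cast
        ring
    _ = ∑ p ∈ andreTrees (k + 1), AndreForest.weight q p := by
        rw [← AndreForest.forestPoly_eq_prod, AndreForest.forestPoly_zero]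
    _ = _ := sum_congr rfl fun p _ => AndreForest.weight_eq_prod_internalsA q p
end

section
/- For every integer n ≥ 1, Σ_{T ∈ 𝒜_n} 2^{in(T)} = n!, where in(T) is the number of internal vertices of T and the sum is over all André trees on n vertices. -/
open scoped Classical

noncomputable section Aux

open Finset

/-- number of children of `v` -/
def nchild (n : ℕ) (p : Fin n → Fin n) (v : Fin n) : ℕ :=
  (Finset.univ.filter fun i => p i = v ∧ i ≠ v).card

lemma filter_eq_nchild {n : ℕ} (p : Fin n → Fin n)
    (h1 : ∀ i : Fin n, (i : ℕ) + 1 < n → (i : ℕ) < (p i : ℕ))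
    (h2 : ∀ i : Fin n, ¬ (i : ℕ) + 1 < n → p i = i) (j : Fin n) :
    (Finset.univ.filter fun i : Fin n => (i : ℕ) + 1 < n ∧ p i = j) =
      Finset.univ.filter fun i => p i = j ∧ i ≠ j := by
  ext i
  simp only [mem_filter, mem_univ, true_and]
  constructor
  · rintro ⟨hi, hpi⟩
    refine ⟨hpi, ?_⟩
    intro h; subst h
    have := h1 i hi
    rw [hpi] at this
    omega
  · rintro ⟨hpi, hij⟩
    by_cases hi : (i : ℕ) + 1 < n
    · exact ⟨hi, hpi⟩
    · exact absurd ((h2 i hi).symm.trans hpi) hij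

lemma isAndre_iff {n : ℕ} (p : Fin n → Fin n) :
    IsAndreTree n p ↔
      (∀ i : Fin n, (i : ℕ) + 1 < n → (i : ℕ) < (p i : ℕ)) ∧
      (∀ i : Fin n, ¬ (i : ℕ) + 1 < n → p i = i) ∧
      ∀ j : Fin n, nchild n p j ≤ 2 := by
  constructor
  · rintro ⟨h1, h2, h3⟩
    refine ⟨h1, h2, fun j => ?_⟩
    rw [nchild, ← filter_eq_nchild p h1 h2 j]
    exact h3 j
  · rintro ⟨h1, h2, h3⟩
    refine ⟨h1, h2, fun j => ?_⟩
    rw [filter_eq_nchild p h1 h2 j]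
    exact h3 j

lemma crossing {n : ℕ} (p : Fin n → Fin n) (v : Fin n) :
    ∀ k, ∀ w, w ≠ v → p^[k] w = v → ∃ u, p u = v ∧ u ≠ v := by
  intro k
  induction k with
  | zero => intro w hw h; exact absurd h hw
  | succ k ih =>
    intro w hw h
    rw [Function.iterate_succ_apply] at h
    by_cases hpw : p w = v
    · exact ⟨w, hpw, hw⟩
    · exact ih (p w) hpw h

lemma internalsA_eq {n : ℕ} (p : Fin n → Fin n) :
    internalsA n p = Finset.univ.filter fun v => 0 < nchild n p v := by
  ext v
  simp only [internalsA, mem_filter, mem_univ, true_and]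
  constructor
  · intro h
    rw [hookA] at h
    obtain ⟨a, ha, b, hb, hab⟩ := Finset.one_lt_card.mp h
    have : ∃ w, w ≠ v ∧ w ∈ Finset.univ.filter fun w : Fin n => ∃ k < n, p^[k] w = v := by
      by_cases hav : a = v
      · exact ⟨b, fun hbv => hab (hav.trans hbv.symm), hb⟩
      · exact ⟨a, hav, ha⟩
    obtain ⟨w, hwv, hw⟩ := this
    simp only [mem_filter, mem_univ, true_and] at hw
    obtain ⟨k, _, hk⟩ := hw
    obtain ⟨u, hu1, hu2⟩ := crossing p v k w hwv hk
    rw [nchild]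
    apply Finset.card_pos.mpr
    exact ⟨u, by simp [hu1, hu2]⟩
  · intro h
    rw [nchild] at h
    obtain ⟨u, hu⟩ := Finset.card_pos.mp h
    simp only [mem_filter, mem_univ, true_and] at hu
    obtain ⟨hpu, huv⟩ := hu
    rw [hookA]
    have hn2 : 1 < n := by
      have : Nontrivial (Fin n) := ⟨u, v, huv⟩
      simpa using Fintype.one_lt_card_iff_nontrivial.mpr this
    apply Finset.one_lt_card.mpr
    refine ⟨u, ?_, v, ?_, huv⟩
    · simp only [mem_filter, mem_univ, true_and]
      exact ⟨1, hn2, by simp [hpu]⟩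
    · simp only [mem_filter, mem_univ, true_and]
      exact ⟨0, by omega, rfl⟩

/-- attach a new smallest vertex `0` as a child of `d.succ` -/
def extA {n : ℕ} (q : Fin n → Fin n) (d : Fin n) : Fin (n + 1) → Fin (n + 1) :=
  fun x => if h : x = 0 then d.succ else (q (x.pred h)).succ

lemma extA_zero {n : ℕ} (q : Fin n → Fin n) (d : Fin n) : extA q d 0 = d.succ := by
  simp [extA]

lemma extA_succ {n : ℕ} (q : Fin n → Fin n) (d : Fin n) (i : Fin n) :
    extA q d i.succ = (q i).succ := by
  simp [extA, Fin.succ_ne_zero]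

lemma nchild_eq_sum {n : ℕ} (p : Fin n → Fin n) (v : Fin n) :
    nchild n p v = ∑ i : Fin n, if p i = v ∧ i ≠ v then 1 else 0 := by
  rw [nchild, Finset.card_filter]

lemma nchild_extA_succ {n : ℕ} (q : Fin n → Fin n) (d : Fin n) (v : Fin n) :
    nchild (n + 1) (extA q d) v.succ = nchild n q v + if d = v then 1 else 0 := by
  rw [nchild_eq_sum, Fin.sum_univ_succ, nchild_eq_sum]
  have h0 : (if extA q d 0 = v.succ ∧ (0 : Fin (n+1)) ≠ v.succ then 1 else 0) =
      (if d = v then 1 else 0) := by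
    rw [extA_zero]
    by_cases h : d = v
    · simp [h, (Fin.succ_ne_zero v).symm]
    · simp [h, fun hc => h (Fin.succ_injective n hc)]
  have hs : ∀ i : Fin n, (if extA q d i.succ = v.succ ∧ i.succ ≠ v.succ then 1 else 0) =
      (if q i = v ∧ i ≠ v then 1 else 0) := by
    intro i
    rw [extA_succ]
    by_cases h1 : q i = v <;> by_cases h2 : i = v <;>
      simp [h1, h2, Fin.succ_inj]
  rw [h0, Finset.sum_congr rfl (fun i _ => hs i)]
  omega

lemma nchild_extA_zero {n : ℕ} (q : Fin n → Fin n) (d : Fin n) :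
    nchild (n + 1) (extA q d) 0 = 0 := by
  rw [nchild_eq_sum, Fin.sum_univ_succ]
  simp [extA_succ, Fin.succ_ne_zero]

lemma extA_isAndre {n : ℕ} (hn : 1 ≤ n) {q : Fin n → Fin n} (hq : IsAndreTree n q)
    {d : Fin n} (hd : nchild n q d ≤ 1) : IsAndreTree (n + 1) (extA q d) := by
  rw [isAndre_iff] at hq ⊢
  obtain ⟨h1, h2, h3⟩ := hq
  refine ⟨?_, ?_, ?_⟩
  · intro i hi
    induction i using Fin.cases with
    | zero => rw [extA_zero]; simp [Fin.succ]
    | succ j =>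
      rw [extA_succ]
      have hj : (j : ℕ) + 1 < n := by
        have := hi
        simp only [Fin.val_succ] at this
        omega
      have := h1 j hj
      simp only [Fin.val_succ]
      omega
  · intro i hi
    induction i using Fin.cases with
    | zero => exfalso; simp at hi; omega
    | succ j =>
      rw [extA_succ]
      have hj : ¬ ((j : ℕ) + 1 < n) := by
        simp only [Fin.val_succ] at hi
        omega
      rw [h2 j hj]
  · intro v
    induction v using Fin.cases with
    | zero => rw [nchild_extA_zero]; omega
    | succ u =>
      rw [nchild_extA_succ]
      by_cases h : d = u
      · subst h; simp; omega
      · simp [h]; exact h3 u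

lemma internals_extA {n : ℕ} (q : Fin n → Fin n) (d : Fin n) :
    (internalsA (n + 1) (extA q d)).card =
      (internalsA n q).card + (if nchild n q d = 0 then 1 else 0) := by
  rw [internalsA_eq, internalsA_eq, Finset.card_filter, Finset.card_filter,
    Fin.sum_univ_succ]
  have h0 : (if 0 < nchild (n+1) (extA q d) 0 then 1 else 0) = 0 := by
    rw [nchild_extA_zero]; simp
  rw [h0, zero_add]
  have hs : ∀ v : Fin n, (if 0 < nchild (n+1) (extA q d) v.succ then 1 else 0) =
      (if 0 < nchild n q v + (if d = v then 1 else 0) then 1 else 0) := by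
    intro v; rw [nchild_extA_succ]
  rw [Finset.sum_congr rfl (fun v _ => hs v)]
  have hd : d ∈ (Finset.univ : Finset (Fin n)) := Finset.mem_univ d
  rw [← Finset.add_sum_erase _ _ hd, ← Finset.add_sum_erase _ _ hd]
  have he : ∀ v ∈ Finset.univ.erase d,
      (if 0 < nchild n q v + (if d = v then 1 else 0) then 1 else 0) =
      (if 0 < nchild n q v then 1 else 0) := by
    intro v hv
    have : d ≠ v := fun h => (Finset.mem_erase.mp hv).1 h.symm
    simp [this]
  rw [Finset.sum_congr rfl he]
  have : (if 0 < nchild n q d + (if d = d then 1 else 0) then 1 else 0) = 1 := by simp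
  rw [this]
  have hx : (if 0 < nchild n q d then 1 else 0) + (if nchild n q d = 0 then 1 else 0) = 1 := by
    by_cases h : nchild n q d = 0
    · simp [h]
    · simp [h, Nat.pos_of_ne_zero h]
  omega

lemma andre_succ {n : ℕ} (hn : 1 ≤ n) :
    andreTrees (n + 1) = (andreTrees n).biUnion
      (fun q => (Finset.univ.filter fun d : Fin n => nchild n q d ≤ 1).image (extA q)) := by
  ext p
  simp only [andreTrees, Finset.mem_biUnion, Finset.mem_filter, Finset.mem_univ, true_and,
    Finset.mem_image]
  constructor
  · intro hp
    have hp' := (isAndre_iff p).mp hp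
    obtain ⟨h1, h2, h3⟩ := hp'
    have hne : ∀ i : Fin n, p i.succ ≠ 0 := by
      intro i
      by_cases hi : (i.succ : ℕ) + 1 < n + 1
      · have := h1 i.succ hi
        intro hc
        rw [hc] at this
        simp at this
      · rw [h2 i.succ hi]
        exact Fin.succ_ne_zero i
    set q : Fin n → Fin n := fun i => (p i.succ).pred (hne i) with hqdef
    have hp0 : p 0 ≠ 0 := by
      have h01 : ((0 : Fin (n+1)) : ℕ) + 1 < n + 1 := by simp; omega
      have := h1 0 h01
      intro hc; rw [hc] at this; simp at this
    set d : Fin n := (p 0).pred hp0 with hddef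
    have hpe : p = extA q d := by
      funext x
      induction x using Fin.cases with
      | zero => rw [extA_zero, hddef, Fin.succ_pred]
      | succ i => rw [extA_succ, hqdef]; simp [Fin.succ_pred]
    have hq : IsAndreTree n q := by
      rw [isAndre_iff]
      refine ⟨?_, ?_, ?_⟩
      · intro i hi
        have hi' : (i.succ : ℕ) + 1 < n + 1 := by simp; omega
        have := h1 i.succ hi'
        rw [hqdef]
        simp only [Fin.coe_pred]
        simp only [Fin.val_succ] at this
        omega
      · intro i hi
        have hi' : ¬ ((i.succ : ℕ) + 1 < n + 1) := by simp; omega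
        have := h2 i.succ hi'
        apply Fin.ext
        simp only [hqdef, Fin.coe_pred, this, Fin.val_succ]
        omega
      · intro v
        have := h3 v.succ
        rw [hpe, nchild_extA_succ] at this
        omega
    refine ⟨q, hq, d, ?_, hpe.symm⟩
    have := h3 d.succ
    rw [hpe, nchild_extA_succ] at this
    simp at this
    omega
  · rintro ⟨q, hq, d, hd, rfl⟩
    exact extA_isAndre hn hq hd

lemma sum_nchild {n : ℕ} (hn : 1 ≤ n) {q : Fin n → Fin n} (hq : IsAndreTree n q) :
    ∑ v : Fin n, nchild n q v = n - 1 := by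
  rw [isAndre_iff] at hq
  obtain ⟨h1, h2, h3⟩ := hq
  have step1 : ∑ v : Fin n, nchild n q v = ∑ i : Fin n, if q i ≠ i then 1 else 0 := by
    rw [Finset.sum_congr rfl (fun v _ => nchild_eq_sum q v), Finset.sum_comm]
    apply Finset.sum_congr rfl
    intro i _
    have : ∀ v : Fin n, (if q i = v ∧ i ≠ v then 1 else 0) =
        (if q i = v then (if i ≠ v then 1 else 0) else 0) := by
      intro v; by_cases h : q i = v <;> simp [h]
    rw [Finset.sum_congr rfl (fun v _ => this v), Finset.sum_ite_eq]
    simp only [Finset.mem_univ, if_true]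
    by_cases h : q i = i
    · simp [h]
    · simp [h, Ne.symm h]
  rw [step1]
  have step2 : ∀ i : Fin n, (if q i ≠ i then 1 else 0) =
      (if (i : ℕ) + 1 < n then 1 else 0) := by
    intro i
    by_cases hi : (i : ℕ) + 1 < n
    · have := h1 i hi
      have hne : q i ≠ i := by intro hc; rw [hc] at this; omega
      simp [hi, hne]
    · simp [hi, h2 i hi]
  rw [Finset.sum_congr rfl (fun i _ => step2 i), ← Finset.card_filter]
  have : (Finset.univ.filter fun i : Fin n => ¬ ((i : ℕ) + 1 < n)) = {⟨n - 1, by omega⟩} := by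
    ext i
    simp only [Finset.mem_filter, Finset.mem_univ, true_and, Finset.mem_singleton, Fin.ext_iff]
    have := i.isLt
    omega
  have htot := Finset.card_filter_add_card_filter_not (s := (Finset.univ : Finset (Fin n)))
    (p := fun i : Fin n => (i : ℕ) + 1 < n)
  rw [this] at htot
  simp at htot
  omega

lemma key_count {n : ℕ} (hn : 1 ≤ n) {q : Fin n → Fin n} (hq : IsAndreTree n q) :
    ∑ d ∈ Finset.univ.filter (fun d : Fin n => nchild n q d ≤ 1),
      (if nchild n q d = 0 then 2 else 1) = n + 1 := by
  have h3 := ((isAndre_iff q).mp hq).2.2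
  rw [Finset.sum_filter]
  have hterm : ∀ d : Fin n,
      (if nchild n q d ≤ 1 then (if nchild n q d = 0 then 2 else 1) else 0) =
      2 - nchild n q d := by
    intro d
    have := h3 d
    interval_cases h : nchild n q d <;> simp
  rw [Finset.sum_congr rfl (fun d _ => hterm d)]
  have hsum : ∑ d : Fin n, (2 - nchild n q d) + ∑ d : Fin n, nchild n q d =
      2 * n := by
    rw [← Finset.sum_add_distrib]
    have : ∀ d : Fin n, (2 - nchild n q d) + nchild n q d = 2 := by
      intro d; have := h3 d; omega
    rw [Finset.sum_congr rfl (fun d _ => this d)]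
    simp [mul_comm]
  rw [sum_nchild hn hq] at hsum
  omega

end Aux

/-- `Σ_{T ∈ 𝒜_n} 2^{in(T)} = n!`, where `in(T)` is the number of internal vertices. -/
theorem stmt4 (n : ℕ) (hn : 1 ≤ n) :
    ∑ p ∈ andreTrees n, 2 ^ (internalsA n p).card = n.factorial := by
  induction n, hn using Nat.le_induction with
  | base =>
    have hA : andreTrees 1 = Finset.univ := by
      rw [andreTrees, Finset.filter_true_of_mem]
      intro p _
      refine ⟨?_, ?_, ?_⟩
      · intro i hi
        have := i.isLt
        omega
      · intro i _
        exact Subsingleton.elim _ _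
      · intro j
        have he : (Finset.univ.filter fun i : Fin 1 => (i : ℕ) + 1 < 1 ∧ p i = j) = ∅ := by
          ext i
          simp only [Finset.mem_filter, Finset.mem_univ, true_and, Finset.notMem_empty,
            iff_false, not_and]
          intro h
          omega
        rw [he]
        simp
    have hint : ∀ p : Fin 1 → Fin 1, (internalsA 1 p).card = 0 := by
      intro p
      rw [internalsA_eq]
      have : ∀ v : Fin 1, nchild 1 p v = 0 := by
        intro v
        rw [nchild, Finset.card_eq_zero]
        ext i
        simp only [Finset.mem_filter, Finset.mem_univ, true_and, Finset.notMem_empty,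
          iff_false, not_and]
        intro _ h
        exact h (Subsingleton.elim i v)
      simp [this]
    rw [hA, Finset.sum_congr rfl (fun p _ => by rw [hint p, pow_zero])]
    simp [Finset.card_univ]
  | succ n hn ih =>
    rw [andre_succ hn, Finset.sum_biUnion ?hdisj]
    case hdisj =>
      intro q hq q' hq' hne
      refine Finset.disjoint_left.mpr ?_
      intro p hp hp'
      simp only [Finset.mem_image, Finset.mem_filter, Finset.mem_univ, true_and] at hp hp'
      obtain ⟨d, hd, rfl⟩ := hp
      obtain ⟨d', hd', heq⟩ := hp'
      apply hne
      funext i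
      apply Fin.succ_injective n
      rw [← extA_succ q' d' i, heq, extA_succ]
    have hinner : ∀ q ∈ andreTrees n,
        (∑ p ∈ (Finset.univ.filter fun d : Fin n => nchild n q d ≤ 1).image (extA q),
          2 ^ (internalsA (n + 1) p).card) = 2 ^ (internalsA n q).card * (n + 1) := by
      intro q hq
      have hqa : IsAndreTree n q := by simpa [andreTrees] using hq
      rw [Finset.sum_image ?hinj]
      case hinj =>
        intro x hx y hy hxy
        have h0 := congrFun hxy 0
        rw [extA_zero, extA_zero] at h0
        exact Fin.succ_injective n h0
      have hterm : ∀ d ∈ Finset.univ.filter fun d : Fin n => nchild n q d ≤ 1,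
          2 ^ (internalsA (n + 1) (extA q d)).card
            = 2 ^ (internalsA n q).card * (if nchild n q d = 0 then 2 else 1) := by
        intro d hd
        rw [internals_extA, pow_add]
        congr 1
        by_cases h : nchild n q d = 0 <;> simp [h]
      rw [Finset.sum_congr rfl hterm, ← Finset.mul_sum, key_count hn hqa]
    rw [Finset.sum_congr rfl hinner, ← Finset.sum_mul, ih, Nat.factorial_succ, mul_comm]
end

section
/- For every integer n ≥ 1, Σ_{T ∈ 𝒜_n} ∏_{v internal vertex of T} (h_v + 1) = (n+1)^{n−1}, where the sum is over all André trees on n vertices. -/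
open scoped Classical

/-!
The vertex labelled `n - 1` is always a child of the root `n`, so removing the root splits an
André tree on `n ≥ 2` vertices into the subtree below `n - 1`, with label set `S ∋ n - 1`, and the
possibly empty subtree of the root's other child, labelled by the rest of `{1, …, n - 1}`.
Relabelling both in increasing order is a bijection onto triples `(S, T₁, T₂)` with `T₁`, `T₂`
André trees on `|S|` and `n - 1 - |S|` vertices, and it preserves hook lengths. As the root
contributes the factor `n + 1`, the weighted counts satisfy
`a (m + 2) = (m + 3) * ∑ₖ C(m, k) a (m + 1 - k) a k`, and `(n + 1) ^ (n - 1)` satisfies this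
recursion by Abel's identity `∑ₖ C(m, k) (k + 1) ^ (k - 1) (y - k) ^ (m - k) = (y + 1) ^ m` at
`y = m + 2`.
-/

open Finset

section Abel

open Polynomial

theorem Polynomial.eq_of_derivative_eq_of_eval_eq {R : Type*} [CommRing R] [CharZero R]
    [IsDomain R] {P Q : R[X]} (hd : derivative P = derivative Q) {a : R}
    (ha : P.eval a = Q.eval a) : P = Q := by
  have hC := eq_C_of_derivative_eq_zero (p := P - Q) (by rw [derivative_sub, hd, sub_self])
  have h0 : (P - Q).coeff 0 = 0 := by simpa [ha] using (congrArg (eval a) hC).symm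
  rwa [h0, map_zero, sub_eq_zero] at hC

theorem sum_choose_mul_neg_one_pow_mul_pow (n : ℕ) :
    ∑ k ∈ range (n + 2), ((n + 1).choose k : ℤ) * (-1) ^ (n + 1 - k) * ((k : ℤ) + 1) ^ n
      = 0 := by
  have h := congrFun (fwdDiff_iter_pow_eq_zero_of_lt (R := ℤ) (Nat.lt_succ_self n)) 1
  rw [fwdDiff_iter_eq_sum_shift] at h
  simp only [smul_eq_mul, nsmul_eq_mul, mul_one, Pi.zero_apply] at h
  rw [← h]
  exact sum_congr rfl fun k _ => by ring

/-- The left-hand side of Abel's identity `∑ₖ C(n,k) x (x+k)^(k-1) (y-k)^(n-k) = (x+y)^n`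
at `x = 1`, as a polynomial in `y`; truncated subtraction makes the `k = 0` term `1`, as it
should be. -/
noncomputable def abelPoly (n : ℕ) : ℤ[X] :=
  ∑ k ∈ range (n + 1),
    (n.choose k : ℤ[X]) * (k + 1 : ℤ[X]) ^ (k - 1) * (X - (k : ℤ[X])) ^ (n - k)

theorem derivative_abelPoly_succ (n : ℕ) :
    derivative (abelPoly (n + 1)) = (n + 1 : ℤ[X]) * abelPoly n := by
  have hterm : ∀ k ∈ range (n + 1),
      derivative
          (((n + 1).choose k : ℤ[X]) * (k + 1 : ℤ[X]) ^ (k - 1) * (X - (k : ℤ[X])) ^ (n + 1 - k))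
        = (n + 1 : ℤ[X]) *
          ((n.choose k : ℤ[X]) * (k + 1 : ℤ[X]) ^ (k - 1) * (X - (k : ℤ[X])) ^ (n - k)) := by
    intro k hk
    have hk : k ≤ n := Nat.lt_succ_iff.1 (mem_range.1 hk)
    have hchoose : (((n + 1).choose k * (n + 1 - k) : ℕ) : ℤ[X])
        = ((n.choose k * (n + 1) : ℕ) : ℤ[X]) := by
      rw [Nat.choose_mul_succ_eq]
    rw [show n + 1 - k = n - k + 1 by omega] at hchoose ⊢
    push_cast at hchoose
    simp only [derivative_mul, derivative_pow_succ, derivative_natCast, derivative_sub,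
      derivative_X, derivative_pow, derivative_one, zero_mul, mul_zero, zero_add,
      add_zero, sub_zero, mul_one, map_add, map_natCast, map_one]
    linear_combination (k + 1 : ℤ[X]) ^ (k - 1) * (X - (k : ℤ[X])) ^ (n - k) * hchoose
  rw [abelPoly, abelPoly, sum_range_succ, Nat.sub_self, pow_zero, mul_one, derivative_add,
    derivative_sum, sum_congr rfl hterm, ← mul_sum]
  simp [derivative_pow]

/-- At `y = -1` the sum is an `(n + 1)`-st finite difference of `y ↦ y ^ n`. -/
theorem eval_neg_one_abelPoly_succ (n : ℕ) : (abelPoly (n + 1)).eval (-1) = 0 := by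
  have hterm : ∀ k ∈ range (n + 2),
      ((n + 1).choose k : ℤ) * ((k : ℤ) + 1) ^ (k - 1) * (-1 - k) ^ (n + 1 - k)
        = ((n + 1).choose k : ℤ) * (-1) ^ (n + 1 - k) * ((k : ℤ) + 1) ^ n := by
    intro k hk
    have hk : k ≤ n + 1 := Nat.lt_succ_iff.1 (mem_range.1 hk)
    rw [show (-1 - k : ℤ) = -1 * (k + 1) by ring, mul_pow]
    rcases k with _ | k
    · simp
    · obtain ⟨j, rfl⟩ : ∃ j, n = k + j := ⟨n - k, by omega⟩
      rw [show k + j + 1 - (k + 1) = j by omega, Nat.add_sub_cancel]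
      ring
  simp only [abelPoly, eval_finsetSum, eval_mul, eval_pow, eval_natCast, eval_add, eval_sub,
    eval_X, eval_one]
  rw [sum_congr rfl hterm, sum_choose_mul_neg_one_pow_mul_pow]

theorem abelPoly_eq (n : ℕ) : abelPoly n = (X + 1) ^ n := by
  induction n with
  | zero => simp [abelPoly]
  | succ n ih =>
    refine eq_of_derivative_eq_of_eval_eq (a := -1) ?_ ?_
    · simp [derivative_abelPoly_succ, ih, derivative_pow]
    · simp [eval_neg_one_abelPoly_succ]

theorem sum_choose_mul_pow_mul_pow (m : ℕ) :
    ∑ k ∈ range (m + 1), m.choose k * (k + 1) ^ (k - 1) * (m + 2 - k) ^ (m - k)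
      = (m + 3) ^ m := by
  have h := congrArg (eval ((m : ℤ) + 2)) (abelPoly_eq m)
  simp only [abelPoly, eval_finsetSum, eval_mul, eval_pow, eval_natCast, eval_add, eval_sub,
    eval_X, eval_one] at h
  zify
  rw [← show ((m : ℤ) + 2 + 1) = m + 3 by ring, ← h]
  refine sum_congr rfl fun k hk => ?_
  rw [Nat.cast_sub (by simp at hk; omega)]
  push_cast
  ring

end Abel

section Reaches

variable {n : ℕ}

def Reaches (p : Fin n → Fin n) (w v : Fin n) : Prop := ∃ k, p^[k] w = v

noncomputable def subtree (p : Fin n → Fin n) (v : Fin n) : Finset (Fin n) :=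
  univ.filter (Reaches p · v)

noncomputable def children (p : Fin n → Fin n) (v : Fin n) : Finset (Fin n) :=
  univ.filter fun w : Fin n => (w : ℕ) + 1 < n ∧ p w = v

variable {p : Fin n → Fin n} {v w : Fin n}

theorem Reaches.refl (p : Fin n → Fin n) (v : Fin n) : Reaches p v v := ⟨0, rfl⟩

theorem Reaches.of_apply (h : Reaches p (p w) v) : Reaches p w v := by
  obtain ⟨k, hk⟩ := h
  exact ⟨k + 1, hk⟩

theorem Reaches.apply_of_ne (h : Reaches p w v) (hne : w ≠ v) : Reaches p (p w) v := by
  obtain ⟨_ | k, hk⟩ := h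
  · exact absurd hk hne
  · exact ⟨k, hk⟩

end Reaches

namespace IsAndreTree

variable {n : ℕ} {p : Fin n → Fin n}

theorem min_le_iterate (hp : IsAndreTree n p) (w : Fin n) (k : ℕ) :
    min ((w : ℕ) + k) (n - 1) ≤ p^[k] w := by
  induction k with
  | zero => simp
  | succ k ih =>
    rw [Function.iterate_succ_apply']
    by_cases h : ((p^[k] w : Fin n) : ℕ) + 1 < n
    · have := hp.1 _ h
      omega
    · rw [hp.2.1 _ h]
      omega

theorem iterate_eq_top (hp : IsAndreTree n p) (w : Fin n) {k : ℕ} (hk : n - 1 ≤ k) {t : Fin n}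
    (ht : ¬ (t : ℕ) + 1 < n) : p^[k] w = t := by
  have := hp.min_le_iterate w k
  have := (p^[k] w).isLt
  ext
  omega

theorem reaches_top (hp : IsAndreTree n p) (w : Fin n) {t : Fin n} (ht : ¬ (t : ℕ) + 1 < n) :
    Reaches p w t :=
  ⟨n - 1, hp.iterate_eq_top w le_rfl ht⟩

theorem le_of_reaches (hp : IsAndreTree n p) {v w : Fin n} (h : Reaches p w v) : w ≤ v := by
  obtain ⟨k, rfl⟩ := h
  have := hp.min_le_iterate w k
  have := w.isLt
  rw [Fin.le_def]
  omega

theorem reaches_iff_exists_lt (hp : IsAndreTree n p) {v w : Fin n} :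
    Reaches p w v ↔ ∃ k < n, p^[k] w = v := by
  refine ⟨fun ⟨k, hk⟩ => ?_, fun ⟨k, _, hk⟩ => ⟨k, hk⟩⟩
  by_cases hkn : k < n
  · exact ⟨k, hkn, hk⟩
  · have ht : ¬ (v : ℕ) + 1 < n := by
      have := hp.min_le_iterate w k
      rw [hk] at this
      omega
    exact ⟨n - 1, by omega, hp.iterate_eq_top w le_rfl ht⟩

theorem hookA_eq_card_subtree (hp : IsAndreTree n p) (v : Fin n) :
    hookA n p v = (subtree p v).card := by
  simp only [hookA, subtree, hp.reaches_iff_exists_lt]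

theorem hookA_last {N : ℕ} {p : Fin (N + 1) → Fin (N + 1)} (hp : IsAndreTree (N + 1) p) :
    hookA (N + 1) p (Fin.last N) = N + 1 := by
  rw [hp.hookA_eq_card_subtree, subtree,
    filter_true_of_mem fun w _ => hp.reaches_top w (by simp), card_univ, Fintype.card_fin]

theorem not_three_children (hp : IsAndreTree n p) {v a b c : Fin n} (ha : a ∈ children p v)
    (hb : b ∈ children p v) (hc : c ∈ children p v) (hab : a ≠ b) (hac : a ≠ c) (hbc : b ≠ c) :
    False := by
  have h3 : ({a, b, c} : Finset (Fin n)).card = 3 := by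
    rw [card_insert_of_notMem (by simp [hab, hac]), card_pair hbc]
  have := card_le_card (show {a, b, c} ⊆ children p v by
    intro x hx
    simp only [mem_insert, mem_singleton] at hx
    rcases hx with rfl | rfl | rfl <;> assumption)
  have := hp.2.2 v
  simp only [children] at *
  omega

end IsAndreTree

/-- `σ` embeds `q` as a full subtree of `p`. -/
structure IsBranchEmbedding {k n : ℕ} (σ : Fin k → Fin n) (q : Fin k → Fin k)
    (p : Fin n → Fin n) : Prop where
  apply_eq : ∀ i : Fin k, (i : ℕ) + 1 < k → p (σ i) = σ (q i)
  exists_eq_of_apply_eq : ∀ v j, p v = σ j → ∃ i : Fin k, (i : ℕ) + 1 < k ∧ σ i = v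

/-- The parent map `p` pulled back along `σ`; a vertex whose parent leaves the image of `σ` becomes
a fixed point, which is how `IsAndreTree` encodes the root. -/
noncomputable def restrictTree {k n : ℕ} (σ : Fin k → Fin n) (p : Fin n → Fin n) (i : Fin k) :
    Fin k :=
  Function.extend σ id (fun _ => i) (p (σ i))

section Restrict

variable {k n : ℕ} {σ : Fin k → Fin n} {q : Fin k → Fin k} {p : Fin n → Fin n}

theorem restrictTree_apply_of_apply_eq (hσ : σ.Injective) {i j : Fin k} (h : p (σ i) = σ j) :
    restrictTree σ p i = j := by
  rw [restrictTree, h, hσ.extend_apply]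
  rfl

theorem restrictTree_apply_of_forall_ne {i : Fin k} (h : ∀ j, σ j ≠ p (σ i)) :
    restrictTree σ p i = i :=
  Function.extend_apply' _ _ _ fun ⟨j, hj⟩ => h j hj

theorem isBranchEmbedding_restrictTree (hσ : σ.Injective)
    (hmem : ∀ i : Fin k, (i : ℕ) + 1 < k → ∃ j, σ j = p (σ i))
    (hchild : ∀ v j, p v = σ j → ∃ i : Fin k, (i : ℕ) + 1 < k ∧ σ i = v) :
    IsBranchEmbedding σ (restrictTree σ p) p where
  apply_eq i hi := by
    obtain ⟨j, hj⟩ := hmem i hi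
    rw [restrictTree_apply_of_apply_eq hσ hj.symm, hj]
  exists_eq_of_apply_eq := hchild

end Restrict

namespace IsBranchEmbedding

variable {k n : ℕ} {σ : Fin k → Fin n} {q : Fin k → Fin k} {p : Fin n → Fin n}

theorem exists_eq_of_reaches (h : IsBranchEmbedding σ q p) {w : Fin n} {j : Fin k}
    (hw : Reaches p w (σ j)) : ∃ i, σ i = w := by
  obtain ⟨t, ht⟩ := hw
  induction t generalizing w with
  | zero => exact ⟨j, ht.symm⟩
  | succ t ih =>
    obtain ⟨i, hi⟩ := ih ht
    obtain ⟨i', -, hi'⟩ := h.exists_eq_of_apply_eq w i hi.symm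
    exact ⟨i', hi'⟩

theorem apply_ne_of_top (h : IsBranchEmbedding σ q p) (hσ : σ.Injective) {i : Fin k}
    (hi : ¬ (i : ℕ) + 1 < k) (j : Fin k) : p (σ i) ≠ σ j := by
  intro he
  obtain ⟨i', hi', he'⟩ := h.exists_eq_of_apply_eq _ _ he
  exact hi (hσ he' ▸ hi')

theorem iterate_eq (h : IsBranchEmbedding σ q p) (hσ : σ.Injective) (t : ℕ) {i j : Fin k}
    (ht : p^[t] (σ i) = σ j) : q^[t] i = j := by
  induction t generalizing i with
  | zero => exact hσ ht
  | succ t ih =>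
    obtain ⟨i', hi'⟩ := h.exists_eq_of_reaches ⟨t, ht⟩
    have hi : (i : ℕ) + 1 < k := by
      by_contra hi
      exact h.apply_ne_of_top hσ hi i' hi'.symm
    rw [Function.iterate_succ_apply] at ht ⊢
    rw [h.apply_eq i hi] at ht
    exact ih ht

theorem reaches_of_iterate_eq (h : IsBranchEmbedding σ q p) (hq : IsAndreTree k q) (t : ℕ)
    {i j : Fin k} (ht : q^[t] i = j) : Reaches p (σ i) (σ j) := by
  induction t generalizing i with
  | zero => exact ht ▸ Reaches.refl p _
  | succ t ih =>
    rw [Function.iterate_succ_apply] at ht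
    by_cases hi : (i : ℕ) + 1 < k
    · exact Reaches.of_apply (h.apply_eq i hi ▸ ih ht)
    · rw [hq.2.1 i hi] at ht
      exact ih ht

theorem reaches_iff (h : IsBranchEmbedding σ q p) (hσ : σ.Injective) (hq : IsAndreTree k q)
    {i j : Fin k} : Reaches p (σ i) (σ j) ↔ Reaches q i j :=
  ⟨fun ⟨t, ht⟩ => ⟨t, h.iterate_eq hσ t ht⟩,
    fun ⟨t, ht⟩ => h.reaches_of_iterate_eq hq t ht⟩

theorem subtree_eq_map (h : IsBranchEmbedding σ q p) (hσ : σ.Injective) (hq : IsAndreTree k q)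
    (i : Fin k) : subtree p (σ i) = (subtree q i).map ⟨σ, hσ⟩ := by
  ext w
  simp only [subtree, mem_filter, mem_univ, true_and, mem_map, Function.Embedding.coeFn_mk]
  constructor
  · intro hw
    obtain ⟨j, rfl⟩ := h.exists_eq_of_reaches hw
    exact ⟨j, (h.reaches_iff hσ hq).1 hw, rfl⟩
  · rintro ⟨j, hj, rfl⟩
    exact (h.reaches_iff hσ hq).2 hj

theorem hookA_eq (h : IsBranchEmbedding σ q p) (hσ : σ.Injective) (hp : IsAndreTree n p)
    (hq : IsAndreTree k q) (i : Fin k) : hookA n p (σ i) = hookA k q i := by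
  rw [hp.hookA_eq_card_subtree, hq.hookA_eq_card_subtree, h.subtree_eq_map hσ hq, card_map]

theorem children_eq_map (h : IsBranchEmbedding σ q p) (hσ : σ.Injective)
    (hσlt : ∀ i, (σ i : ℕ) + 1 < n) (j : Fin k) :
    children p (σ j) = (children q j).map ⟨σ, hσ⟩ := by
  ext v
  simp only [children, mem_filter, mem_univ, true_and, mem_map, Function.Embedding.coeFn_mk]
  constructor
  · rintro ⟨-, hv⟩
    obtain ⟨i, hi, rfl⟩ := h.exists_eq_of_apply_eq v j hv
    exact ⟨i, ⟨hi, hσ (h.apply_eq i hi ▸ hv)⟩, rfl⟩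
  · rintro ⟨i, ⟨hi, rfl⟩, rfl⟩
    exact ⟨hσlt i, h.apply_eq i hi⟩

theorem restrictTree_eq (h : IsBranchEmbedding σ q p) (hσ : σ.Injective) (hq : IsAndreTree k q) :
    restrictTree σ p = q := by
  funext i
  by_cases hi : (i : ℕ) + 1 < k
  · exact restrictTree_apply_of_apply_eq hσ (h.apply_eq i hi)
  · rw [hq.2.1 i hi]
    exact restrictTree_apply_of_forall_ne fun j hj => h.apply_ne_of_top hσ hi j hj.symm

theorem isAndreTree (h : IsBranchEmbedding σ q p) (hσ : StrictMono σ)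
    (hσlt : ∀ i, (σ i : ℕ) + 1 < n) (hp : IsAndreTree n p)
    (htop : ∀ i : Fin k, ¬ (i : ℕ) + 1 < k → q i = i) : IsAndreTree k q := by
  refine ⟨fun i hi => ?_, htop, fun j => ?_⟩
  · have := hp.1 (σ i) (hσlt i)
    rw [h.apply_eq i hi, ← Fin.lt_def, hσ.lt_iff_lt] at this
    exact this
  · have := hp.2.2 (σ j)
    rwa [← children, h.children_eq_map hσ.injective hσlt, card_map] at this

theorem isAndreTree_restrictTree (h : IsBranchEmbedding σ (restrictTree σ p) p)
    (hσ : StrictMono σ) (hσlt : ∀ i, (σ i : ℕ) + 1 < n) (hp : IsAndreTree n p) :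
    IsAndreTree k (restrictTree σ p) :=
  h.isAndreTree hσ hσlt hp fun _ hi =>
    restrictTree_apply_of_forall_ne fun j hj => h.apply_ne_of_top hσ.injective hi j hj.symm

end IsBranchEmbedding

section Glue

variable {N : ℕ}

noncomputable def embed (A : Finset (Fin N)) (i : Fin A.card) : Fin (N + 1) :=
  (A.orderEmbOfFin rfl i).castSucc

def parentVia {k : ℕ} (σ : Fin k → Fin (N + 1)) (q : Fin k → Fin k) (i : Fin k) :
    Fin (N + 1) :=
  if (i : ℕ) + 1 < k then σ (q i) else Fin.last N

/-- The trees `q₁` on `A` and `q₂` on `B` hung below a common root `Fin.last N`. -/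
noncomputable def glue (A B : Finset (Fin N)) (q₁ : Fin A.card → Fin A.card)
    (q₂ : Fin B.card → Fin B.card) : Fin (N + 1) → Fin (N + 1) :=
  Function.extend (embed A) (parentVia (embed A) q₁)
    (Function.extend (embed B) (parentVia (embed B) q₂) fun _ => Fin.last N)

variable {A B : Finset (Fin N)} {q₁ : Fin A.card → Fin A.card}
  {q₂ : Fin B.card → Fin B.card}

theorem embed_strictMono (A : Finset (Fin N)) : StrictMono (embed A) :=
  fun _ _ h => Fin.castSucc_lt_castSucc_iff.2 ((A.orderEmbOfFin rfl).strictMono h)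

theorem embed_injective (A : Finset (Fin N)) : (embed A).Injective :=
  (embed_strictMono A).injective

theorem embed_lt (A : Finset (Fin N)) (i : Fin A.card) : (embed A i : ℕ) + 1 < N + 1 := by
  simp [embed]

theorem embed_ne_last (A : Finset (Fin N)) (i : Fin A.card) : embed A i ≠ Fin.last N :=
  Fin.castSucc_ne_last _

theorem exists_embed_eq_castSucc_iff {a : Fin N} : (∃ i, embed A i = a.castSucc) ↔ a ∈ A := by
  simp only [embed, Fin.castSucc_inj]
  rw [← Set.mem_range, range_orderEmbOfFin, mem_coe]

theorem embed_ne_embed (hAB : Disjoint A B) (i : Fin A.card) (j : Fin B.card) :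
    embed A i ≠ embed B j := by
  intro h
  exact disjoint_left.1 hAB (orderEmbOfFin_mem A rfl i)
    (Fin.castSucc_injective _ h ▸ orderEmbOfFin_mem B rfl j)

theorem eq_last_or_exists_embed (S : Finset (Fin N)) (v : Fin (N + 1)) :
    v = Fin.last N ∨ (∃ i, embed S i = v) ∨ ∃ i, embed Sᶜ i = v := by
  induction v using Fin.lastCases with
  | last => exact Or.inl rfl
  | cast a =>
    by_cases ha : a ∈ S
    · exact Or.inr (Or.inl (exists_embed_eq_castSucc_iff.2 ha))
    · exact Or.inr (Or.inr (exists_embed_eq_castSucc_iff.2 (mem_compl.2 ha)))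

theorem embed_le_of_top {i : Fin A.card} (hi : ¬ (i : ℕ) + 1 < A.card) (j : Fin A.card) :
    embed A j ≤ embed A i :=
  (embed_strictMono A).monotone (Fin.le_def.2 (by omega))

theorem lt_parentVia {k : ℕ} {σ : Fin k → Fin (N + 1)} {q : Fin k → Fin k}
    (hσ : StrictMono σ) (hσlt : ∀ i, (σ i : ℕ) + 1 < N + 1) (hq : IsAndreTree k q) (i : Fin k) :
    (σ i : ℕ) < parentVia σ q i := by
  unfold parentVia
  split_ifs with hi
  · exact Fin.lt_def.1 (hσ (Fin.lt_def.2 (hq.1 i hi)))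
  · have := hσlt i
    simp only [Fin.val_last]
    omega

theorem glue_embed_left (i : Fin A.card) :
    glue A B q₁ q₂ (embed A i) = parentVia (embed A) q₁ i :=
  (embed_injective A).extend_apply _ _ i

theorem glue_comm (hAB : Disjoint A B) : glue A B q₁ q₂ = glue B A q₂ q₁ := by
  funext v
  by_cases ha : ∃ i, embed A i = v
  · obtain ⟨i, rfl⟩ := ha
    rw [glue_embed_left, glue, Function.extend_apply' _ _ _ fun ⟨j, hj⟩ =>
      embed_ne_embed hAB i j hj.symm]
    exact ((embed_injective A).extend_apply _ _ i).symm
  · by_cases hb : ∃ j, embed B j = v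
    · obtain ⟨j, rfl⟩ := hb
      rw [glue_embed_left, glue, Function.extend_apply' _ _ _ ha]
      exact (embed_injective B).extend_apply _ _ j
    · simp only [glue, Function.extend_apply' _ _ _ ha, Function.extend_apply' _ _ _ hb]

theorem glue_embed_right (hAB : Disjoint A B) (j : Fin B.card) :
    glue A B q₁ q₂ (embed B j) = parentVia (embed B) q₂ j := by
  rw [glue_comm hAB, glue_embed_left]

theorem glue_last : glue A B q₁ q₂ (Fin.last N) = Fin.last N := by
  rw [glue, Function.extend_apply' _ _ _ fun ⟨i, hi⟩ => embed_ne_last A i hi,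
    Function.extend_apply' _ _ _ fun ⟨i, hi⟩ => embed_ne_last B i hi]

theorem isBranchEmbedding_glue_left (hAB : Disjoint A B) :
    IsBranchEmbedding (embed A) q₁ (glue A B q₁ q₂) where
  apply_eq i hi := by rw [glue_embed_left, parentVia, if_pos hi]
  exists_eq_of_apply_eq v j hv := by
    by_cases ha : ∃ i, embed A i = v
    · obtain ⟨i, rfl⟩ := ha
      rw [glue_embed_left, parentVia] at hv
      split_ifs at hv with hi
      · exact ⟨i, hi, rfl⟩
      · exact absurd hv.symm (embed_ne_last A j)
    by_cases hb : ∃ i, embed B i = v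
    · obtain ⟨i, rfl⟩ := hb
      rw [glue_embed_right hAB, parentVia] at hv
      split_ifs at hv
      · exact absurd hv.symm (embed_ne_embed hAB j _)
      · exact absurd hv.symm (embed_ne_last A j)
    · rw [glue, Function.extend_apply' _ _ _ ha, Function.extend_apply' _ _ _ hb] at hv
      exact absurd hv.symm (embed_ne_last A j)

theorem isBranchEmbedding_glue_right (hAB : Disjoint A B) :
    IsBranchEmbedding (embed B) q₂ (glue A B q₁ q₂) :=
  glue_comm hAB ▸ isBranchEmbedding_glue_left hAB.symm

theorem eq_of_glue_embed_left_eq_last {i i' : Fin A.card}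
    (h : glue A B q₁ q₂ (embed A i) = Fin.last N)
    (h' : glue A B q₁ q₂ (embed A i') = Fin.last N) : i = i' := by
  simp only [glue_embed_left, parentVia] at h h'
  split_ifs at h h' with hi hi'
  · exact absurd h (embed_ne_last A _)
  · exact absurd h (embed_ne_last A _)
  · exact absurd h' (embed_ne_last A _)
  · ext
    omega

end Glue

/-- Two children of the root in the same part are both the top vertex of that part, so
`v ↦ (v ∈ S)` is injective on the children of the root. -/
theorem card_children_glue_last_le {N : ℕ} (S : Finset (Fin N)) (q₁ : Fin S.card → Fin S.card)
    (q₂ : Fin Sᶜ.card → Fin Sᶜ.card) :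
    (children (glue S Sᶜ q₁ q₂) (Fin.last N)).card ≤ 2 := by
  have hS : Disjoint S Sᶜ := disjoint_compl_right
  refine (card_le_card_of_injOn (fun v => decide (∃ i, embed S i = v)) (t := univ)
    (fun _ _ => mem_coe.2 (mem_univ _)) ?_).trans_eq rfl
  intro v hv w hw hvw
  simp only [children, coe_filter, mem_univ, true_and] at hv hw
  rcases eq_last_or_exists_embed S v with rfl | ⟨i, rfl⟩ | ⟨i, rfl⟩
  · simp at hv
  all_goals rcases eq_last_or_exists_embed S w with rfl | ⟨i', rfl⟩ | ⟨i', rfl⟩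
  · simp at hw
  · rw [eq_of_glue_embed_left_eq_last hv.2 hw.2]
  · simp [fun j => embed_ne_embed hS j i'] at hvw
  · simp at hw
  · simp [fun j => embed_ne_embed hS j i] at hvw
  · rw [glue_comm hS] at hv hw
    rw [eq_of_glue_embed_left_eq_last hv.2 hw.2]

theorem isAndreTree_glue {N : ℕ} (S : Finset (Fin N)) {q₁ : Fin S.card → Fin S.card}
    {q₂ : Fin Sᶜ.card → Fin Sᶜ.card} (hq₁ : IsAndreTree _ q₁)
    (hq₂ : IsAndreTree _ q₂) :
    IsAndreTree (N + 1) (glue S Sᶜ q₁ q₂) := by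
  have hS : Disjoint S Sᶜ := disjoint_compl_right
  refine ⟨fun v hv => ?_, fun v hv => ?_, fun j => ?_⟩
  · rcases eq_last_or_exists_embed S v with rfl | ⟨i, rfl⟩ | ⟨i, rfl⟩
    · simp at hv
    · rw [glue_embed_left]
      exact lt_parentVia (embed_strictMono S) (embed_lt S) hq₁ i
    · rw [glue_embed_right hS]
      exact lt_parentVia (embed_strictMono _) (embed_lt _) hq₂ i
  · obtain rfl : v = Fin.last N := Fin.ext (by simp; omega)
    exact glue_last
  · rw [← children]
    rcases eq_last_or_exists_embed S j with rfl | ⟨j, rfl⟩ | ⟨j, rfl⟩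
    · exact card_children_glue_last_le S q₁ q₂
    · rw [(isBranchEmbedding_glue_left hS).children_eq_map (embed_injective S) (embed_lt S),
        card_map]
      exact hq₁.2.2 j
    · rw [(isBranchEmbedding_glue_right hS).children_eq_map (embed_injective _) (embed_lt _),
        card_map]
      exact hq₂.2.2 j

section Split

variable {N : ℕ} {A B : Finset (Fin N)} {q₁ : Fin A.card → Fin A.card}
  {q₂ : Fin B.card → Fin B.card} {p : Fin (N + 1) → Fin (N + 1)}

theorem apply_embed_eq_parentVia (hAB : Disjoint A B) (hcov : ∀ a, a ∈ A ∨ a ∈ B)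
    (h₁ : IsBranchEmbedding (embed A) q₁ p) (h₂ : IsBranchEmbedding (embed B) q₂ p)
    (i : Fin A.card) : p (embed A i) = parentVia (embed A) q₁ i := by
  unfold parentVia
  split_ifs with hi
  · exact h₁.apply_eq i hi
  · by_contra hne
    obtain ⟨a, ha⟩ := Fin.exists_castSucc_eq.2 hne
    rcases hcov a with haA | haB
    · obtain ⟨j, hj⟩ := exists_embed_eq_castSucc_iff.2 haA
      exact h₁.apply_ne_of_top (embed_injective A) hi j (hj.trans ha).symm
    · obtain ⟨j, hj⟩ := exists_embed_eq_castSucc_iff.2 haB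
      obtain ⟨i', -, hi'⟩ := h₂.exists_eq_of_apply_eq _ j (hj.trans ha).symm
      exact embed_ne_embed hAB i i' hi'.symm

theorem glue_eq_of_isBranchEmbedding (hp : IsAndreTree (N + 1) p) (S : Finset (Fin N))
    {q₁ : Fin S.card → Fin S.card} {q₂ : Fin Sᶜ.card → Fin Sᶜ.card}
    (h₁ : IsBranchEmbedding (embed S) q₁ p) (h₂ : IsBranchEmbedding (embed Sᶜ) q₂ p) :
    glue S Sᶜ q₁ q₂ = p := by
  have hS : Disjoint S Sᶜ := disjoint_compl_right
  have hcov (a : Fin N) : a ∈ S ∨ a ∈ Sᶜ := (em (a ∈ S)).imp_right mem_compl.2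
  funext v
  rcases eq_last_or_exists_embed S v with rfl | ⟨i, rfl⟩ | ⟨i, rfl⟩
  · rw [glue_last, hp.2.1 _ (by simp)]
  · rw [glue_embed_left, apply_embed_eq_parentVia hS hcov h₁ h₂]
  · rw [glue_embed_right hS, apply_embed_eq_parentVia hS.symm (fun a => (hcov a).symm) h₂ h₁]

end Split

noncomputable def weight {n : ℕ} (p : Fin n → Fin n) : ℕ :=
  ∏ v ∈ internalsA n p, (hookA n p v + 1)

noncomputable def andreSum (n : ℕ) : ℕ := ∑ p ∈ andreTrees n, weight p

def hookFactor (h : ℕ) : ℕ := if 1 < h then h + 1 else 1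

theorem weight_eq_prod_univ {n : ℕ} (p : Fin n → Fin n) :
    weight p = ∏ v, hookFactor (hookA n p v) :=
  prod_filter _ _

theorem prod_embed {N : ℕ} (A : Finset (Fin N)) (f : Fin (N + 1) → ℕ) :
    ∏ a ∈ A, f a.castSucc = ∏ i, f (embed A i) := by
  conv_lhs => rw [← map_orderEmbOfFin_univ A rfl, prod_map]
  rfl

theorem weight_eq_of_isBranchEmbedding {N : ℕ} (hN : 0 < N) {p : Fin (N + 1) → Fin (N + 1)}
    (hp : IsAndreTree (N + 1) p) (S : Finset (Fin N)) {q₁ : Fin S.card → Fin S.card}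
    {q₂ : Fin Sᶜ.card → Fin Sᶜ.card} (hq₁ : IsAndreTree _ q₁)
    (hq₂ : IsAndreTree _ q₂) (h₁ : IsBranchEmbedding (embed S) q₁ p)
    (h₂ : IsBranchEmbedding (embed Sᶜ) q₂ p) :
    weight p = (N + 2) * weight q₁ * weight q₂ := by
  have hroot : hookFactor (hookA (N + 1) p (Fin.last N)) = N + 2 := by
    rw [hookFactor, hp.hookA_last, if_pos (by omega)]
  rw [weight_eq_prod_univ, weight_eq_prod_univ, weight_eq_prod_univ, Fin.prod_univ_castSucc,
    hroot, ← prod_mul_prod_compl S, prod_embed S fun v => hookFactor (hookA (N + 1) p v),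
    prod_embed Sᶜ fun v => hookFactor (hookA (N + 1) p v)]
  simp only [h₁.hookA_eq (embed_injective S) hp hq₁, h₂.hookA_eq (embed_injective _) hp hq₂]
  ring

section RootBranch

variable {m : ℕ} {p : Fin (m + 2) → Fin (m + 2)}

/-- The vertices of the subtree below `m`, the second largest vertex, which is always a child of
the root `m + 1`. -/
noncomputable def rootBranch (p : Fin (m + 2) → Fin (m + 2)) : Finset (Fin (m + 1)) :=
  univ.filter fun a => Reaches p a.castSucc (Fin.last m).castSucc

theorem last_mem_rootBranch (p : Fin (m + 2) → Fin (m + 2)) : Fin.last m ∈ rootBranch p := by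
  simp [rootBranch, Reaches.refl]

theorem embed_eq_castSucc_last_iff {A : Finset (Fin (m + 1))} (hA : Fin.last m ∈ A)
    (i : Fin A.card) : embed A i = (Fin.last m).castSucc ↔ ¬ (i : ℕ) + 1 < A.card := by
  obtain ⟨j, hj⟩ := exists_embed_eq_castSucc_iff.2 hA
  constructor
  · intro h hi
    have := embed_strictMono A (show i < ⟨i + 1, hi⟩ from Fin.lt_def.2 (Nat.lt_succ_self _))
    have := embed_lt A ⟨i + 1, hi⟩
    rw [h, Fin.lt_def] at *
    simp only [Fin.val_castSucc, Fin.val_last] at *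
    omega
  · intro hi
    have := Fin.le_def.1 (hj ▸ embed_le_of_top hi j)
    have := embed_lt A i
    ext
    simp only [Fin.val_castSucc, Fin.val_last] at *
    omega

theorem IsAndreTree.apply_castSucc_last (hp : IsAndreTree (m + 2) p) :
    p (Fin.last m).castSucc = Fin.last (m + 1) := by
  have := hp.1 (Fin.last m).castSucc (by simp)
  have := (p (Fin.last m).castSucc).isLt
  ext
  simp only [Fin.val_castSucc, Fin.val_last] at *
  omega

theorem exists_embed_rootBranch_eq_iff (hp : IsAndreTree (m + 2) p) {v : Fin (m + 2)} :
    (∃ i, embed (rootBranch p) i = v) ↔ Reaches p v (Fin.last m).castSucc := by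
  induction v using Fin.lastCases with
  | last =>
    refine iff_of_false (fun ⟨i, hi⟩ => embed_ne_last _ i hi) fun h => ?_
    have := Fin.le_def.1 (hp.le_of_reaches h)
    simp at this
  | cast a => simp [exists_embed_eq_castSucc_iff, rootBranch]

theorem exists_embed_compl_rootBranch_eq_iff {v : Fin (m + 2)} :
    (∃ i, embed (rootBranch p)ᶜ i = v) ↔
      v ≠ Fin.last (m + 1) ∧ ¬ Reaches p v (Fin.last m).castSucc := by
  induction v using Fin.lastCases with
  | last => exact iff_of_false (fun ⟨i, hi⟩ => embed_ne_last _ i hi) fun h => h.1 rfl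
  | cast a => simp [exists_embed_eq_castSucc_iff, rootBranch, Fin.castSucc_ne_last]

theorem isBranchEmbedding_rootBranch (hp : IsAndreTree (m + 2) p) :
    IsBranchEmbedding (embed (rootBranch p)) (restrictTree (embed (rootBranch p)) p) p := by
  have hS := last_mem_rootBranch p
  refine isBranchEmbedding_restrictTree (embed_injective _) (fun i hi => ?_) fun v j hv => ?_
  · refine (exists_embed_rootBranch_eq_iff hp).2 (Reaches.apply_of_ne ?_ ?_)
    · exact (exists_embed_rootBranch_eq_iff hp).1 ⟨i, rfl⟩
    · exact fun h => ((embed_eq_castSucc_last_iff hS i).1 h) hi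
  · have hv' : Reaches p v (Fin.last m).castSucc :=
      Reaches.of_apply ((exists_embed_rootBranch_eq_iff hp).1 ⟨j, hv.symm⟩)
    obtain ⟨i, rfl⟩ := (exists_embed_rootBranch_eq_iff hp).2 hv'
    refine ⟨i, ?_, rfl⟩
    by_contra hi
    rw [(embed_eq_castSucc_last_iff hS i).2 hi, hp.apply_castSucc_last] at hv
    exact embed_ne_last _ j hv.symm

theorem apply_embed_compl_rootBranch_of_top (hp : IsAndreTree (m + 2) p)
    {i : Fin (rootBranch p)ᶜ.card} (hi : ¬ (i : ℕ) + 1 < (rootBranch p)ᶜ.card) :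
    p (embed (rootBranch p)ᶜ i) = Fin.last (m + 1) := by
  obtain ⟨-, hnr⟩ := exists_embed_compl_rootBranch_eq_iff.1 ⟨i, rfl⟩
  by_contra hne
  obtain ⟨a, ha⟩ := Fin.exists_castSucc_eq.2 hne
  by_cases haS : a ∈ rootBranch p
  · obtain ⟨j, hj⟩ := exists_embed_eq_castSucc_iff.2 haS
    exact hnr (Reaches.of_apply ((exists_embed_rootBranch_eq_iff hp).1 ⟨j, hj.trans ha⟩))
  · obtain ⟨j, hj⟩ := exists_embed_eq_castSucc_iff.2 (mem_compl.2 haS)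
    have hle := Fin.le_def.1 (embed_le_of_top hi j)
    have hlt := hp.1 _ (embed_lt _ i)
    rw [hj, ha] at hle
    omega

theorem apply_embed_compl_rootBranch_ne_last (hp : IsAndreTree (m + 2) p)
    {i : Fin (rootBranch p)ᶜ.card} (hi : (i : ℕ) + 1 < (rootBranch p)ᶜ.card) :
    p (embed (rootBranch p)ᶜ i) ≠ Fin.last (m + 1) := by
  intro hroot
  obtain ⟨-, hnr⟩ := exists_embed_compl_rootBranch_eq_iff.1 ⟨i, rfl⟩
  let t : Fin (rootBranch p)ᶜ.card := ⟨(rootBranch p)ᶜ.card - 1, by omega⟩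
  have ht : ¬ (t : ℕ) + 1 < (rootBranch p)ᶜ.card := by
    show ¬ (rootBranch p)ᶜ.card - 1 + 1 < (rootBranch p)ᶜ.card
    omega
  obtain ⟨-, hnrt⟩ := exists_embed_compl_rootBranch_eq_iff.1 ⟨t, rfl⟩
  exact hp.not_three_children (v := Fin.last (m + 1))
    (mem_filter.2 ⟨mem_univ _, embed_lt _ i, hroot⟩)
    (mem_filter.2 ⟨mem_univ _, embed_lt _ t, apply_embed_compl_rootBranch_of_top hp ht⟩)
    (mem_filter.2 ⟨mem_univ _, by simp, hp.apply_castSucc_last⟩)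
    ((embed_injective _).ne fun h => ht (h ▸ hi))
    (fun h => hnr (h ▸ Reaches.refl _ _)) (fun h => hnrt (h ▸ Reaches.refl _ _))

theorem isBranchEmbedding_compl_rootBranch (hp : IsAndreTree (m + 2) p) :
    IsBranchEmbedding (embed (rootBranch p)ᶜ) (restrictTree (embed (rootBranch p)ᶜ) p) p := by
  have hℓ := hp.apply_castSucc_last
  refine isBranchEmbedding_restrictTree (embed_injective _) (fun i hi => ?_) fun v j hv => ?_
  · obtain ⟨-, hnr⟩ := exists_embed_compl_rootBranch_eq_iff.1 ⟨i, rfl⟩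
    exact exists_embed_compl_rootBranch_eq_iff.2
      ⟨apply_embed_compl_rootBranch_ne_last hp hi, fun h => hnr h.of_apply⟩
  · have hv' : v ≠ Fin.last (m + 1) := by
      rintro rfl
      exact embed_ne_last _ j (hv.symm.trans (hp.2.1 _ (by simp)))
    have hnr : ¬ Reaches p v (Fin.last m).castSucc := by
      intro h
      by_cases hvℓ : v = (Fin.last m).castSucc
      · rw [hvℓ, hℓ] at hv
        exact embed_ne_last _ j hv.symm
      · exact (exists_embed_compl_rootBranch_eq_iff.1 ⟨j, hv.symm⟩).2 (h.apply_of_ne hvℓ)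
    obtain ⟨i, rfl⟩ := exists_embed_compl_rootBranch_eq_iff.2 ⟨hv', hnr⟩
    refine ⟨i, ?_, rfl⟩
    by_contra hi
    rw [apply_embed_compl_rootBranch_of_top hp hi] at hv
    exact embed_ne_last _ j hv.symm

theorem rootBranch_eq_of_isBranchEmbedding {S : Finset (Fin (m + 1))}
    (hS : Fin.last m ∈ S) {q : Fin S.card → Fin S.card} (hq : IsAndreTree _ q)
    (h : IsBranchEmbedding (embed S) q p) : rootBranch p = S := by
  let t : Fin S.card := ⟨S.card - 1, Nat.sub_lt (card_pos.2 ⟨_, hS⟩) one_pos⟩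
  have ht : ¬ (t : ℕ) + 1 < S.card := by
    show ¬ S.card - 1 + 1 < S.card
    omega
  have hℓ : embed S t = (Fin.last m).castSucc := (embed_eq_castSucc_last_iff hS t).2 ht
  ext a
  simp only [rootBranch, mem_filter, mem_univ, true_and, ← hℓ]
  refine ⟨fun h' => exists_embed_eq_castSucc_iff.1 (h.exists_eq_of_reaches h'), fun ha => ?_⟩
  obtain ⟨i, hi⟩ := exists_embed_eq_castSucc_iff.2 ha
  rw [← hi]
  exact (h.reaches_iff (embed_injective S) hq).2 (hq.reaches_top i ht)

end RootBranch

theorem mem_andreTrees {n : ℕ} {p : Fin n → Fin n} :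
    p ∈ andreTrees n ↔ IsAndreTree n p := by
  simp [andreTrees]

theorem sum_weight_rootBranch_eq (m : ℕ) {S : Finset (Fin (m + 1))} (hS : Fin.last m ∈ S) :
    ∑ p ∈ (andreTrees (m + 2)).filter (rootBranch · = S), weight p
      = (m + 3) * andreSum S.card * andreSum Sᶜ.card := by
  have hSc : Disjoint S Sᶜ := disjoint_compl_right
  rw [mul_assoc, andreSum, andreSum, sum_mul_sum]
  simp_rw [mul_sum]
  rw [← sum_product']
  refine sum_nbij' (fun p => (restrictTree (embed S) p, restrictTree (embed Sᶜ) p))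
    (fun q => glue S Sᶜ q.1 q.2) ?_ ?_ ?_ ?_ ?_
  all_goals simp only [mem_filter, mem_product, mem_andreTrees, and_imp, Prod.forall]
  · rintro p hp rfl
    exact ⟨(isBranchEmbedding_rootBranch hp).isAndreTree_restrictTree (embed_strictMono _)
      (embed_lt _) hp, (isBranchEmbedding_compl_rootBranch hp).isAndreTree_restrictTree
      (embed_strictMono _) (embed_lt _) hp⟩
  · intro q₁ q₂ hq₁ hq₂
    exact ⟨isAndreTree_glue S hq₁ hq₂,
      rootBranch_eq_of_isBranchEmbedding hS hq₁ (isBranchEmbedding_glue_left hSc)⟩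
  · rintro p hp rfl
    exact glue_eq_of_isBranchEmbedding hp _ (isBranchEmbedding_rootBranch hp)
      (isBranchEmbedding_compl_rootBranch hp)
  · intro q₁ q₂ hq₁ hq₂
    exact Prod.ext ((isBranchEmbedding_glue_left hSc).restrictTree_eq (embed_injective S) hq₁)
      ((isBranchEmbedding_glue_right hSc).restrictTree_eq (embed_injective _) hq₂)
  · rintro p hp rfl
    have h₁ := isBranchEmbedding_rootBranch hp
    have h₂ := isBranchEmbedding_compl_rootBranch hp
    rw [weight_eq_of_isBranchEmbedding (by omega : 0 < m + 1) hp _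
      (h₁.isAndreTree_restrictTree (embed_strictMono _) (embed_lt _) hp)
      (h₂.isAndreTree_restrictTree (embed_strictMono _) (embed_lt _) hp) h₁ h₂]
    ring

theorem sum_filter_mem_card_compl {α M : Type*} [Fintype α] [DecidableEq α] [AddCommMonoid M]
    (a : α) (f : ℕ → M) :
    ∑ S ∈ (univ : Finset (Finset α)).filter (a ∈ ·), f Sᶜ.card
      = ∑ k ∈ range (Fintype.card α), (Fintype.card α - 1).choose k • f k := by
  have hcard : (univ.erase a).card + 1 = Fintype.card α := by
    rw [card_erase_of_mem (mem_univ a), card_univ]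
    have := Fintype.card_pos_iff.2 ⟨a⟩
    omega
  rw [← hcard, Nat.add_sub_cancel, ← sum_powerset_apply_card]
  refine sum_nbij' compl compl ?_ ?_ ?_ ?_ ?_ <;> simp [subset_iff]
  exact fun S ha x hx hxa => hx (hxa ▸ ha)

theorem andreSum_add_two (m : ℕ) :
    andreSum (m + 2)
      = (m + 3) * ∑ k ∈ range (m + 1), m.choose k * andreSum (m + 1 - k) * andreSum k := by
  rw [andreSum, ← sum_fiberwise_of_maps_to (t := univ.filter (Fin.last m ∈ ·))
    (g := rootBranch) fun p _ => mem_filter.2 ⟨mem_univ _, last_mem_rootBranch p⟩]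
  have hcard (S : Finset (Fin (m + 1))) :
      (m + 3) * andreSum S.card * andreSum Sᶜ.card
        = (m + 3) * (andreSum (m + 1 - Sᶜ.card) * andreSum Sᶜ.card) := by
    have := card_le_univ S
    rw [card_compl, Fintype.card_fin] at *
    rw [Nat.sub_sub_self this, mul_assoc]
  simp only [sum_congr rfl fun S hS => sum_weight_rootBranch_eq m (mem_filter.1 hS).2, hcard,
    ← mul_sum, sum_filter_mem_card_compl (Fin.last m) fun k => andreSum (m + 1 - k) * andreSum k,
    Fintype.card_fin, Nat.add_sub_cancel, smul_eq_mul, mul_assoc]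

theorem andreSum_of_le_one {n : ℕ} (hn : n ≤ 1) : andreSum n = 1 := by
  have : Subsingleton (Fin n) := Fin.subsingleton_iff_le_one.2 hn
  have htree (p : Fin n → Fin n) : IsAndreTree n p :=
    ⟨fun i hi => absurd hi (by omega), fun _ _ => Subsingleton.elim _ _,
      fun _ => (card_filter_le _ _).trans (by simp; omega)⟩
  have hweight (p : Fin n → Fin n) : weight p = 1 := by
    refine prod_eq_one fun v hv => absurd (mem_filter.1 hv).2 ?_
    have : hookA n p v ≤ n := (card_filter_le _ _).trans_eq (card_fin n)
    omega
  rw [andreSum, sum_congr rfl fun p _ => hweight p, sum_const, smul_eq_mul, mul_one,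
    andreTrees, filter_true_of_mem fun p _ => htree p, card_univ, Fintype.card_fun,
    Fintype.card_fin]
  interval_cases n <;> rfl

theorem andreSum_eq (n : ℕ) : andreSum n = (n + 1) ^ (n - 1) := by
  induction n using Nat.strong_induction_on with
  | _ n ih =>
    obtain hn | ⟨m, rfl⟩ : n ≤ 1 ∨ ∃ m, n = m + 2 := by
      rcases n with _ | _ | m <;> simp
    · rw [andreSum_of_le_one hn]
      interval_cases n <;> rfl
    have hterm : ∀ k ∈ range (m + 1), m.choose k * andreSum (m + 1 - k) * andreSum k
        = m.choose k * (k + 1) ^ (k - 1) * (m + 2 - k) ^ (m - k) := by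
      intro k hk
      have hk := mem_range.1 hk
      rw [ih _ (by omega), ih k (by omega), show m + 1 - k + 1 = m + 2 - k by omega,
        show m + 1 - k - 1 = m - k by omega]
      ring
    rw [andreSum_add_two, sum_congr rfl hterm, sum_choose_mul_pow_mul_pow, ← pow_succ']
    rfl

theorem stmt5_general (n : ℕ) :
    ∑ p ∈ andreTrees n, ∏ v ∈ internalsA n p, (hookA n p v + 1)
      = (n + 1) ^ (n - 1) :=
  andreSum_eq n

/-- `Σ_{T ∈ 𝒜_n} ∏_{v internal} (h_v + 1) = (n+1)^(n-1)`, the sum being over all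
André trees on `n` vertices. -/
theorem stmt5 (n : ℕ) (hn : 1 ≤ n) :
    ∑ p ∈ andreTrees n, ∏ v ∈ internalsA n p, (hookA n p v + 1)
      = (n + 1) ^ (n - 1) :=
  stmt5_general n
end

section
/- For every integer n ≥ 1 and every rational number q, ∏_{i=1}^{n−1} (i+1 + q(n−i)) = (n!/2^n) · Σ_{T ∈ 𝒯_n} ∏_{v vertex of T} (q + (2−q)/h_v), where the sum is over all plane binary trees with n vertices. -/
/-- The product over all vertices `v` of a plane binary tree of `f h_v`, where
`h_v` is the hook length of `v` (the number of vertices of the subtree rooted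
at `v`). -/
def hookProd (f : ℕ → ℚ) : Tree Unit → ℚ
  | BinaryTree.nil => 1
  | BinaryTree.node _ l r => f (l.numNodes + r.numNodes + 1) * hookProd f l * hookProd f r

/-!
Write `S_n` for the sum over trees with `n` vertices. Splitting a tree at its root gives
`S_{n+1} = (q + (2 - q)/(n + 1)) ∑_{i+j=n} S_i S_j`, so `n! S_n / 2^n` satisfies a binomial
convolution recurrence. It is solved by the Hagen–Rothe coefficients
`A_n(a) = a ∏_{i=1}^{n-1} (a + n b - i d)` at `a = 1`, `b = q`, `d = q - 1`, thanks to the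
Hagen–Rothe identity `∑ (n choose i) A_i(a) A_{n-i}(c) = A_n(a + c)`; and `A_n(1)` is the
left-hand product.

The Hagen–Rothe identity is proved for `d ≠ 0` by induction on `n`: `A` satisfies the Pascal
rule `A_{k+1}(a) = A_{k+1}(a - d) + (k + 1) d A_k(a + b - d)`, so the difference of the two
sides, a polynomial in `a`, is invariant under `a ↦ a - d`; it vanishes at `a = 0`, hence at
all multiples of `d`, hence identically. The case `d = 0` follows since both sides are
polynomials in `d`.
-/

open Finset Polynomial BinaryTree
open scoped Nat

section CommRing

variable {R S : Type*} [CommRing R] [CommRing S]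

def fallingProd (x d : R) (k : ℕ) : R := ∏ j ∈ range k, (x - j * d)

/-- For `d = 1` this is `k! · a / (a + k b) · (a + k b).choose k`. -/
def rotheCoeff (b d a : R) : ℕ → R
  | 0 => 1
  | k + 1 => a * fallingProd (a + (k + 1) * b - d) d k

theorem fallingProd_succ (x d : R) (k : ℕ) :
    fallingProd x d (k + 1) = x * fallingProd (x - d) d k := by
  rw [fallingProd, prod_range_succ', fallingProd, mul_comm]
  simp only [Nat.cast_zero, zero_mul, sub_zero, Nat.cast_add, Nat.cast_one]
  exact congrArg (x * ·) (prod_congr rfl fun j _ => by ring)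

theorem fallingProd_succ' (x d : R) (k : ℕ) :
    fallingProd x d (k + 1) = fallingProd x d k * (x - k * d) :=
  prod_range_succ _ _

theorem map_fallingProd (f : R →+* S) (x d : R) (k : ℕ) :
    f (fallingProd x d k) = fallingProd (f x) (f d) k := by
  simp [fallingProd, map_prod]

theorem map_rotheCoeff (f : R →+* S) (b d a : R) (k : ℕ) :
    f (rotheCoeff b d a k) = rotheCoeff (f b) (f d) (f a) k := by
  cases k <;> simp [rotheCoeff, map_fallingProd]

theorem eval_rotheCoeff (x : R) (b d a : R[X]) (k : ℕ) :
    (rotheCoeff b d a k).eval x = rotheCoeff (b.eval x) (d.eval x) (a.eval x) k :=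
  map_rotheCoeff (evalRingHom x) b d a k

theorem rotheCoeff_succ_eq_prod_Icc (b d a : R) (k : ℕ) :
    rotheCoeff b d a (k + 1) = a * ∏ i ∈ Icc 1 k, (a + (k + 1) * b - i * d) := by
  rw [rotheCoeff, fallingProd, ← Ico_add_one_right_eq_Icc, prod_Ico_eq_prod_range,
    add_tsub_cancel_right]
  exact congrArg (a * ·) (prod_congr rfl fun j _ => by push_cast; ring)

theorem rotheCoeff_pascal (b d a : R) (k : ℕ) :
    rotheCoeff b d a (k + 1) =
      rotheCoeff b d (a - d) (k + 1) + (k + 1) * d * rotheCoeff b d (a + b - d) k := by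
  cases k with
  | zero => simp [rotheCoeff, fallingProd]
  | succ k =>
    set x := a + ((k + 1 : ℕ) + 1) * b - d
    have hx : a - d + ((k + 1 : ℕ) + 1) * b - d = x - d := by ring
    have hx' : a + b - d + (k + 1) * b - d = x - d := by push_cast [x]; ring
    rw [rotheCoeff, rotheCoeff, rotheCoeff, hx, hx', fallingProd_succ, fallingProd_succ']
    push_cast [x]
    ring

theorem rotheCoeff_succ_mul (b d a : R) (k : ℕ) :
    (a + b - d) * rotheCoeff b d a (k + 1) =
      a * (a + (k + 1) * b - d) * rotheCoeff b d (a + b - d) k := by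
  cases k with
  | zero =>
    simp only [rotheCoeff, fallingProd, range_zero, prod_empty, Nat.cast_zero]
    ring
  | succ k =>
    have hx : a + b - d + (k + 1) * b - d = a + ((k + 1 : ℕ) + 1) * b - d - d := by
      push_cast; ring
    rw [rotheCoeff, rotheCoeff, hx, fallingProd_succ]
    ring

theorem sum_choose_mul_rotheCoeff_shift (b d a c : R) (n : ℕ) :
    ∑ p ∈ antidiagonal (n + 1),
        ((n + 1).choose p.1 : R) * rotheCoeff b d a p.1 * rotheCoeff b d c p.2 =
      ∑ p ∈ antidiagonal (n + 1),
          ((n + 1).choose p.1 : R) * rotheCoeff b d (a - d) p.1 * rotheCoeff b d c p.2 +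
        (n + 1) * d * ∑ p ∈ antidiagonal n,
          (n.choose p.1 : R) * rotheCoeff b d (a + b - d) p.1 * rotheCoeff b d c p.2 := by
  have hterm : ∀ p ∈ antidiagonal n,
      ((n + 1).choose (p.1 + 1) : R) * rotheCoeff b d a (p.1 + 1) * rotheCoeff b d c p.2 =
        ((n + 1).choose (p.1 + 1) : R) * rotheCoeff b d (a - d) (p.1 + 1) * rotheCoeff b d c p.2 +
          (n + 1) * d * ((n.choose p.1 : R) * rotheCoeff b d (a + b - d) p.1 *
            rotheCoeff b d c p.2) := by
    intro p _
    have hchoose := congrArg (Nat.cast : ℕ → R) (Nat.add_one_mul_choose_eq n p.1)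
    push_cast at hchoose
    rw [rotheCoeff_pascal]
    linear_combination (-d * rotheCoeff b d (a + b - d) p.1 * rotheCoeff b d c p.2) * hchoose
  rw [Nat.sum_antidiagonal_succ, Nat.sum_antidiagonal_succ, sum_congr rfl hterm,
    sum_add_distrib, mul_sum]
  simp only [rotheCoeff, Nat.choose_zero_right]
  ring

end CommRing

section Domain

variable {R : Type*} [CommRing R] [IsDomain R]

theorem Polynomial.eq_zero_of_eval_sub_eq [CharZero R] {p : R[X]} {d : R} (hd : d ≠ 0)
    (hp : ∀ x, p.eval x = p.eval (x - d)) (h0 : p.eval 0 = 0) : p = 0 := by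
  have hroots : ∀ k : ℕ, p.eval (k * d) = 0 := by
    intro k
    induction k with
    | zero => simpa using h0
    | succ k ih => rw [hp, Nat.cast_succ, add_one_mul, add_sub_cancel_right, ih]
  refine eq_zero_of_infinite_isRoot p (Set.infinite_of_injective_forall_mem ?_ hroots)
  exact fun i j hij => Nat.cast_injective (mul_right_cancel₀ hd hij)

theorem Polynomial.eq_zero_of_eval_eq_zero_of_ne_zero [Infinite R] {p : R[X]}
    (hp : ∀ x ≠ 0, p.eval x = 0) : p = 0 := by
  refine eq_zero_of_infinite_isRoot p ((Set.finite_singleton 0).infinite_compl.mono ?_)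
  exact fun x hx => hp x hx

variable [CharZero R]

theorem sum_choose_mul_rotheCoeff_of_ne_zero (b c : R) {d : R} (hd : d ≠ 0) (n : ℕ) (a : R) :
    ∑ p ∈ antidiagonal n, (n.choose p.1 : R) * rotheCoeff b d a p.1 * rotheCoeff b d c p.2 =
      rotheCoeff b d (a + c) n := by
  induction n generalizing a with
  | zero => simp [rotheCoeff]
  | succ n ih =>
    set p : R[X] := ∑ p ∈ antidiagonal (n + 1), ((n + 1).choose p.1 : R[X]) *
        rotheCoeff (C b) (C d) X p.1 * rotheCoeff (C b) (C d) (C c) p.2 -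
      rotheCoeff (C b) (C d) (X + C c) (n + 1)
    have hp : ∀ x, p.eval x = ∑ p ∈ antidiagonal (n + 1), ((n + 1).choose p.1 : R) *
        rotheCoeff b d x p.1 * rotheCoeff b d c p.2 - rotheCoeff b d (x + c) (n + 1) := by
      intro x
      simp [p, eval_finsetSum, eval_rotheCoeff]
    have hshift : ∀ x, p.eval x = p.eval (x - d) := by
      intro x
      rw [hp, hp, sum_choose_mul_rotheCoeff_shift, ih, rotheCoeff_pascal (a := x + c),
        show x + c - d = x - d + c by ring, show x + c + b - d = x + b - d + c by ring]
      ring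
    have h0 : p.eval 0 = 0 := by
      rw [hp, Nat.sum_antidiagonal_succ]
      simp [rotheCoeff]
    have := congrArg (eval a) (eq_zero_of_eval_sub_eq hd hshift h0)
    rw [hp, eval_zero] at this
    exact sub_eq_zero.mp this

theorem sum_choose_mul_rotheCoeff (b d a c : R) (n : ℕ) :
    ∑ p ∈ antidiagonal n, (n.choose p.1 : R) * rotheCoeff b d a p.1 * rotheCoeff b d c p.2 =
      rotheCoeff b d (a + c) n := by
  set p : R[X] := ∑ p ∈ antidiagonal n, (n.choose p.1 : R[X]) *
      rotheCoeff (C b) X (C a) p.1 * rotheCoeff (C b) X (C c) p.2 -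
    rotheCoeff (C b) X (C a + C c) n
  have hp : ∀ x, p.eval x = ∑ p ∈ antidiagonal n, (n.choose p.1 : R) *
      rotheCoeff b x a p.1 * rotheCoeff b x c p.2 - rotheCoeff b x (a + c) n := by
    intro x
    simp [p, eval_finsetSum, eval_rotheCoeff]
  have hzero : p = 0 := eq_zero_of_eval_eq_zero_of_ne_zero fun x hx => by
    rw [hp, sum_choose_mul_rotheCoeff_of_ne_zero b c hx, sub_self]
  have := congrArg (eval d) hzero
  rw [hp, eval_zero] at this
  exact sub_eq_zero.mp this

end Domain

theorem sum_hookProd_treesOfNumNodesEq_succ (f : ℕ → ℚ) (n : ℕ) :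
    ∑ T ∈ treesOfNumNodesEq (n + 1), hookProd f T =
      f (n + 1) * ∑ p ∈ antidiagonal n,
        (∑ T ∈ treesOfNumNodesEq p.1, hookProd f T) * ∑ T ∈ treesOfNumNodesEq p.2, hookProd f T := by
  have hdisj : (antidiagonal n : Set (ℕ × ℕ)).PairwiseDisjoint fun p =>
      pairwiseNode (treesOfNumNodesEq p.1) (treesOfNumNodesEq p.2) := by
    simp_rw [Set.PairwiseDisjoint, Set.Pairwise, disjoint_left]
    aesop
  rw [treesOfNumNodesEq_succ, sum_biUnion hdisj, mul_sum]
  refine sum_congr rfl fun p hp => ?_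
  rw [sum_map, sum_product, sum_mul_sum, mul_sum]
  refine sum_congr rfl fun l hl => ?_
  rw [mul_sum]
  refine sum_congr rfl fun r hr => ?_
  rw [mem_treesOfNumNodesEq] at hl hr
  rw [HasAntidiagonal.mem_antidiagonal] at hp
  rw [← hp, ← hl, ← hr]
  exact mul_assoc _ _ _

theorem factorial_mul_sum_hookProd (q : ℚ) (n : ℕ) :
    (n ! : ℚ) * ∑ T ∈ treesOfNumNodesEq n, hookProd (fun h => q + (2 - q) / h) T =
      2 ^ n * rotheCoeff q (q - 1) 1 n := by
  induction n using Nat.strong_induction_on with | _ n ih => ?_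
  cases n with
  | zero => simp [rotheCoeff, hookProd]
  | succ n =>
    set S : ℕ → ℚ := fun m => ∑ T ∈ treesOfNumNodesEq m, hookProd (fun h => q + (2 - q) / h) T
    have hsum : ∑ p ∈ antidiagonal n, (n ! : ℚ) * (S p.1 * S p.2) =
        2 ^ n * rotheCoeff q (q - 1) 2 n := by
      have hrothe := sum_choose_mul_rotheCoeff q (q - 1) 1 1 n
      rw [one_add_one_eq_two] at hrothe
      rw [← hrothe, mul_sum]
      refine sum_congr rfl fun p hp => ?_
      rw [HasAntidiagonal.mem_antidiagonal] at hp
      have hfact := congrArg (Nat.cast : ℕ → ℚ) (Nat.add_choose_mul_factorial_mul_factorial p.1 p.2)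
      rw [← Nat.choose_symm_add] at hfact
      push_cast at hfact
      calc (n ! : ℚ) * (S p.1 * S p.2) = (n.choose p.1) * (p.1 ! * S p.1) * (p.2 ! * S p.2) := by
            rw [← hp, ← hfact]; ring
        _ = 2 ^ (p.1 + p.2) * ((n.choose p.1) * rotheCoeff q (q - 1) 1 p.1 *
              rotheCoeff q (q - 1) 1 p.2) := by
            rw [ih p.1 (by omega), ih p.2 (by omega), pow_add]; ring
        _ = _ := by rw [hp]
    have hstep := rotheCoeff_succ_mul q (q - 1) 1 n
    rw [show (1 : ℚ) + q - (q - 1) = 2 by ring] at hstep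
    rw [sum_hookProd_treesOfNumNodesEq_succ]
    calc (((n + 1) ! : ℕ) : ℚ) * ((q + (2 - q) / ((n + 1 : ℕ) : ℚ)) *
          ∑ p ∈ antidiagonal n, S p.1 * S p.2) =
        (n * q + 2) * ∑ p ∈ antidiagonal n, (n ! : ℚ) * (S p.1 * S p.2) := by
          rw [← mul_sum, Nat.factorial_succ]; push_cast; field_simp; ring
      _ = _ := by rw [hsum]; linear_combination (-2 ^ n : ℚ) * hstep

theorem stmt6_general (n : ℕ) (q : ℚ) :
    ∏ i ∈ Finset.Icc 1 (n - 1), ((i : ℚ) + 1 + q * ((n : ℚ) - (i : ℚ)))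
      = (n.factorial : ℚ) / 2 ^ n *
          ∑ T ∈ Tree.treesOfNumNodesEq n, hookProd (fun h => q + (2 - q) / (h : ℚ)) T := by
  have hprod : ∏ i ∈ Icc 1 (n - 1), ((i : ℚ) + 1 + q * ((n : ℚ) - (i : ℚ))) =
      rotheCoeff q (q - 1) 1 n := by
    cases n with
    | zero => simp [rotheCoeff]
    | succ m =>
      rw [rotheCoeff_succ_eq_prod_Icc, one_mul, add_tsub_cancel_right]
      exact prod_congr rfl fun i _ => by push_cast; ring
  rw [hprod, div_mul_eq_mul_div, factorial_mul_sum_hookProd,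
    mul_div_cancel_left₀ _ (by positivity)]

/-- `∏_{i=1}^{n-1} (i + 1 + q(n - i)) = (n!/2^n) · Σ_{T ∈ 𝒯_n} ∏_{v ∈ T} (q + (2-q)/h_v)`,
the sum being over all plane binary trees with `n` vertices. -/
theorem stmt6 (n : ℕ) (hn : 1 ≤ n) (q : ℚ) :
    ∏ i ∈ Finset.Icc 1 (n - 1), ((i : ℚ) + 1 + q * ((n : ℚ) - (i : ℚ)))
      = (n.factorial : ℚ) / 2 ^ n *
          ∑ T ∈ Tree.treesOfNumNodesEq n, hookProd (fun h => q + (2 - q) / (h : ℚ)) T :=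
  stmt6_general n q
end

section
/- For every integer n ≥ 1, the number of pointed André trees on n vertices equals the number of André trees on n+1 vertices: |𝒜*_n| = |𝒜_{n+1}|. -/
open scoped Classical

noncomputable section

/-- The number of children of the vertex `v`. -/
def childCount (n : ℕ) (p : Fin n → Fin n) (v : Fin n) : ℕ :=
  (Finset.univ.filter fun i : Fin n => (i : ℕ) + 1 < n ∧ p i = v).card

/-- The set of pointed André trees on `n` vertices: an André tree together with a
distinguished vertex having at most one child. -/
def pointedAndreTrees (n : ℕ) : Finset ((Fin n → Fin n) × Fin n) :=
  (andreTrees n ×ˢ Finset.univ).filter fun x => childCount n x.1 x.2 ≤ 1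

/-- `v` lies on the path from the root to the distinguished vertex `vstar`
(endpoints included), i.e. `v` is an ancestor of `vstar` (or `vstar` itself). -/
def OnPath (n : ℕ) (p : Fin n → Fin n) (vstar v : Fin n) : Prop :=
  ∃ k < n, p^[k] vstar = v

end

/-!
Shift all labels of a pointed André tree `(p, v)` up by one and hang a new vertex with
label `1` below `v`. Since `v` had at most one child, the result is an André tree on
`n + 1` vertices, in which the new vertex is a leaf. Conversely, in an André tree on
`n + 1 ≥ 2` vertices the vertex labelled `1` is a leaf (nothing has a smaller label) whose
parent has at most one other child, so removing it and pointing at its parent inverts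
the construction.
-/

open Finset

lemma isAndreTree_iff_childCount (m : ℕ) (q : Fin m → Fin m) :
    IsAndreTree m q ↔ (∀ i : Fin m, (i : ℕ) + 1 < m → (i : ℕ) < (q i : ℕ)) ∧
      (∀ i : Fin m, ¬ (i : ℕ) + 1 < m → q i = i) ∧ ∀ j, childCount m q j ≤ 2 :=
  Iff.rfl

lemma IsAndreTree.ne_zero {n : ℕ} (hn : 1 ≤ n) {q : Fin (n + 1) → Fin (n + 1)}
    (hq : IsAndreTree (n + 1) q) (i : Fin (n + 1)) : q i ≠ 0 := by
  obtain ⟨hlt, hroot, -⟩ := hq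
  rw [Ne, Fin.ext_iff, Fin.val_zero]
  by_cases hi : (i : ℕ) + 1 < n + 1
  · have := hlt i hi
    omega
  · rw [hroot i hi]
    omega

namespace AndreTree

variable {n : ℕ}

def attachLeaf (p : Fin n → Fin n) (v : Fin n) : Fin (n + 1) → Fin (n + 1) :=
  Fin.cons v.succ (Fin.succ ∘ p)

@[simp]
lemma attachLeaf_zero (p : Fin n → Fin n) (v : Fin n) : attachLeaf p v 0 = v.succ := rfl

@[simp]
lemma attachLeaf_succ (p : Fin n → Fin n) (v k : Fin n) :
    attachLeaf p v k.succ = (p k).succ := rfl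

lemma attachLeaf_injective :
    Function.Injective fun x : (Fin n → Fin n) × Fin n => attachLeaf x.1 x.2 := by
  rintro ⟨p, v⟩ ⟨p', v'⟩ h
  obtain ⟨hv, hp⟩ := Fin.cons_injective2 h
  simp only [Prod.mk.injEq]
  exact ⟨(Fin.succ_injective n).comp_left hp, Fin.succ_injective n hv⟩

lemma childCount_attachLeaf (p : Fin n → Fin n) (v : Fin n) (j : Fin (n + 1)) :
    childCount (n + 1) (attachLeaf p v) j =
      (if v.succ = j then 1 else 0) + #{k : Fin n | (k : ℕ) + 1 < n ∧ (p k).succ = j} := by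
  rw [childCount, card_filter, Fin.sum_univ_succ, card_filter]
  simp [v.pos]

lemma childCount_attachLeaf_zero (p : Fin n → Fin n) (v : Fin n) :
    childCount (n + 1) (attachLeaf p v) 0 = 0 := by
  simp [childCount_attachLeaf, Fin.succ_ne_zero]

lemma childCount_attachLeaf_succ (p : Fin n → Fin n) (v w : Fin n) :
    childCount (n + 1) (attachLeaf p v) w.succ = (if v = w then 1 else 0) + childCount n p w := by
  rw [childCount_attachLeaf, childCount]
  simp

lemma forall_childCount_attachLeaf_le_two_iff (p : Fin n → Fin n) (v : Fin n) :
    (∀ j, childCount (n + 1) (attachLeaf p v) j ≤ 2) ↔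
      (∀ w, childCount n p w ≤ 2) ∧ childCount n p v ≤ 1 := by
  simp only [Fin.forall_fin_succ, childCount_attachLeaf_zero, childCount_attachLeaf_succ,
    zero_le, true_and]
  constructor
  · intro h
    refine ⟨fun w => le_trans (Nat.le_add_left _ _) (h w), ?_⟩
    have := h v
    simp only [if_true] at this
    omega
  · rintro ⟨h2, h1⟩ w
    split_ifs with hvw
    · subst hvw; omega
    · simpa using h2 w

lemma isAndreTree_attachLeaf_iff (p : Fin n → Fin n) (v : Fin n) :
    IsAndreTree (n + 1) (attachLeaf p v) ↔ IsAndreTree n p ∧ childCount n p v ≤ 1 := by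
  rw [isAndreTree_iff_childCount, isAndreTree_iff_childCount,
    forall_childCount_attachLeaf_le_two_iff]
  simp [Fin.forall_fin_succ, v.pos.ne', and_assoc]

lemma attachLeaf_mem_andreTrees_iff (x : (Fin n → Fin n) × Fin n) :
    attachLeaf x.1 x.2 ∈ andreTrees (n + 1) ↔ x ∈ pointedAndreTrees n := by
  simp [andreTrees, pointedAndreTrees, isAndreTree_attachLeaf_iff]

lemma exists_attachLeaf_eq (q : Fin (n + 1) → Fin (n + 1)) (hq : ∀ i, q i ≠ 0) :
    ∃ x : (Fin n → Fin n) × Fin n, attachLeaf x.1 x.2 = q := by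
  choose f hf using fun i => Fin.exists_succ_eq.2 (hq i)
  refine ⟨(f ∘ Fin.succ, f 0), funext fun i => ?_⟩
  cases i using Fin.cases <;> simp [hf]

end AndreTree

open AndreTree

/-- The number of pointed André trees on `n` vertices equals the number of André
trees on `n + 1` vertices. -/
theorem stmt12 (n : ℕ) (hn : 1 ≤ n) :
    (pointedAndreTrees n).card = (andreTrees (n + 1)).card := by
  refine card_bij (fun x _ => attachLeaf x.1 x.2)
    (fun x hx => (attachLeaf_mem_andreTrees_iff x).2 hx)
    (fun x _ y _ h => attachLeaf_injective h) fun q hq => ?_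
  have hq' : IsAndreTree (n + 1) q := (mem_filter.1 hq).2
  obtain ⟨x, rfl⟩ := exists_attachLeaf_eq q (hq'.ne_zero hn)
  exact ⟨x, (attachLeaf_mem_andreTrees_iff x).1 hq, rfl⟩
end

section
/- Define P_0(q)=P_1(q)=1 and P_m(q)=∏_{j=1}^{m−1}(j+1+q(m−j)) for m ≥ 2. Then for every integer n ≥ 1 the polynomial identity P_n(q) = (1 + q(n−1)/2) · Σ_{k=0}^{n−1} C(n−1,k) · P_k(q) · P_{n−1−k}(q) holds, where C(n−1,k) is the binomial coefficient. -/
open Finset Polynomial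

def Acal {R : Type*} [CommRing R] (z w : R) : ℕ → R → R
  | 0, _ => 1
  | n + 1, x => x * ∏ i ∈ Finset.range n, (x + ((n : R) + 1) * z - ((i : R) + 1) * w)

@[simp] lemma Acal_zero {R : Type*} [CommRing R] (z w : R) (x : R) : Acal z w 0 x = 1 := rfl

@[simp] lemma Acal_at_zero {R : Type*} [CommRing R] (z w : R) (n : ℕ) :
    Acal z w (n + 1) 0 = 0 := by simp [Acal]

lemma Acal_map {R S : Type*} [CommRing R] [CommRing S] (f : R →+* S) (z w : R) (n : ℕ) (x : R) :
    f (Acal z w n x) = Acal (f z) (f w) n (f x) := by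
  cases n with
  | zero => simp [Acal]
  | succ n => simp [Acal, map_prod]

lemma Acal_pascal {R : Type*} [CommRing R] (z w x : R) (n : ℕ) :
    Acal z w (n + 1) x - Acal z w (n + 1) (x - w)
      = ((n : R) + 1) * w * Acal z w n (x + z - w) := by
  cases n with
  | zero => simp [Acal]
  | succ m =>
    have h1 : Acal z w (m + 2) x
        = x * ((x + ((m : R) + 2) * z - w)
            * ∏ i ∈ range m, (x + ((m : R) + 2) * z - ((i : R) + 2) * w)) := by
      show x * ∏ i ∈ range (m+1), (x + (((m+1 : ℕ) : R) + 1) * z - ((i : R) + 1) * w) = _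
      rw [Finset.prod_range_succ']
      rw [mul_comm (∏ _x ∈ range m, _)]
      congr 1
      congr 1
      · push_cast; ring
      · apply Finset.prod_congr rfl; intro i _; push_cast; ring
    have h2 : Acal z w (m + 2) (x - w)
        = (x - w) * ((∏ i ∈ range m, (x + ((m : R) + 2) * z - ((i : R) + 2) * w))
            * (x + ((m : R) + 2) * z - ((m : R) + 2) * w)) := by
      show (x-w) * ∏ i ∈ range (m+1), ((x-w) + (((m+1 : ℕ) : R) + 1) * z - ((i : R) + 1) * w) = _
      rw [Finset.prod_range_succ]
      congr 1
      congr 1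
      · apply Finset.prod_congr rfl; intro i _; push_cast; ring
      · push_cast; ring
    have h3 : Acal z w (m + 1) (x + z - w)
        = (x + z - w) * ∏ i ∈ range m, (x + ((m : R) + 2) * z - ((i : R) + 2) * w) := by
      show (x + z - w) * ∏ i ∈ range m, ((x + z - w) + ((m : R) + 1) * z - ((i : R) + 1) * w) = _
      congr 1
      apply Finset.prod_congr rfl; intro i _; push_cast; ring
    rw [h1, h2, h3]
    push_cast
    ring

lemma Acal_conv (z₀ y₀ : Polynomial ℚ) (n : ℕ) :
    ∀ x : Polynomial ℚ,
      ∑ k ∈ Finset.range (n + 1),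
          ((n.choose k : ℕ) : Polynomial ℚ) * Acal z₀ X k x * Acal z₀ X (n - k) y₀
        = Acal z₀ X n (x + y₀) := by
  induction n with
  | zero => intro x; simp
  | succ n ih =>
    set S : Polynomial ℚ → Polynomial ℚ := fun x =>
      ∑ k ∈ Finset.range (n + 2),
        (((n+1).choose k : ℕ) : Polynomial ℚ) * Acal z₀ X k x * Acal z₀ X (n + 1 - k) y₀
      with hS
    set D : Polynomial ℚ → Polynomial ℚ := fun x => S x - Acal z₀ X (n + 1) (x + y₀) with hD
    -- the finite-difference identity
    have hdiff : ∀ x : Polynomial ℚ, S x - S (x - X)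
        = Acal z₀ X (n + 1) (x + y₀) - Acal z₀ X (n + 1) (x + y₀ - X) := by
      intro x
      have l1 : S x - S (x - X) = ∑ k ∈ Finset.range (n + 2),
          (((n+1).choose k : ℕ) : Polynomial ℚ)
            * (Acal z₀ X k x - Acal z₀ X k (x - X)) * Acal z₀ X (n + 1 - k) y₀ := by
        rw [hS, ← Finset.sum_sub_distrib]
        exact Finset.sum_congr rfl fun k _ => by ring
      rw [l1, Finset.sum_range_succ']
      have l2 : ∀ j ∈ Finset.range (n + 1),
          (((n+1).choose (j+1) : ℕ) : Polynomial ℚ)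
            * (Acal z₀ X (j+1) x - Acal z₀ X (j+1) (x - X)) * Acal z₀ X (n + 1 - (j+1)) y₀
          = (((n+1 : ℕ)) : Polynomial ℚ) * X *
              (((n.choose j : ℕ) : Polynomial ℚ) * Acal z₀ X j (x + z₀ - X)
                * Acal z₀ X (n - j) y₀) := by
        intro j _
        rw [Acal_pascal]
        have hc : (((n+1).choose (j+1) : ℕ) : Polynomial ℚ) * ((j : Polynomial ℚ) + 1)
            = ((n+1 : ℕ) : Polynomial ℚ) * ((n.choose j : ℕ) : Polynomial ℚ) := by
          have h := Nat.add_one_mul_choose_eq n j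
          exact_mod_cast h.symm
        have he : n + 1 - (j + 1) = n - j := by omega
        rw [he]
        linear_combination (X * Acal z₀ X j (x + z₀ - X) * Acal z₀ X (n - j) y₀) * hc
      rw [Finset.sum_congr rfl l2, ← Finset.mul_sum, ih (x + z₀ - X)]
      have harg : x + z₀ - X + y₀ = x + y₀ + z₀ - X := by ring
      rw [harg]
      have hp := Acal_pascal z₀ X (x + y₀) n
      rw [hp]
      push_cast
      simp only [Acal_zero]
      ring
    have hshift : ∀ x : Polynomial ℚ, D x = D (x - X) := by
      intro x
      have h1 := hdiff x
      have harg : Acal z₀ X (n + 1) (x - X + y₀) = Acal z₀ X (n + 1) (x + y₀ - X) :=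
        congrArg (Acal z₀ X (n + 1)) (by ring)
      simp only [hD]
      linear_combination h1 + harg
    have hzero : D 0 = 0 := by
      simp only [hD, hS]
      rw [Finset.sum_range_succ']
      simp
    have hroots : ∀ k : ℕ, D ((k : Polynomial ℚ) * X) = 0 := by
      intro k
      induction k with
      | zero => simpa using hzero
      | succ k ihk =>
        have h1 := hshift (((k + 1 : ℕ) : Polynomial ℚ) * X)
        have harg : ((k + 1 : ℕ) : Polynomial ℚ) * X - X = ((k : ℕ) : Polynomial ℚ) * X := by
          push_cast; ring
        rw [harg] at h1
        rw [h1]; exact ihk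
    -- lift to a polynomial identity and use rigidity
    set DP : Polynomial (Polynomial ℚ) :=
      (∑ k ∈ Finset.range (n + 2),
        (((n+1).choose k : ℕ) : Polynomial (Polynomial ℚ))
          * Acal (C z₀) (C X) k X * Acal (C z₀) (C X) (n + 1 - k) (C y₀))
        - Acal (C z₀) (C X) (n + 1) (X + C y₀) with hDPdef
    have hevalDP : ∀ t : Polynomial ℚ, DP.eval t = D t := by
      intro t
      show (evalRingHom t) DP = D t
      simp only [hDPdef, map_sub, map_sum, map_mul, map_natCast, Acal_map, map_add,
        coe_evalRingHom, eval_C, eval_X, hD, hS]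
    have hDP0 : DP = 0 := by
      have hg : Function.Injective (algebraMap (Polynomial ℚ) (FractionRing (Polynomial ℚ))) :=
        IsFractionRing.injective _ _
      have hmap : DP.map (algebraMap (Polynomial ℚ) (FractionRing (Polynomial ℚ))) = 0 := by
        apply Polynomial.eq_zero_of_infinite_isRoot
        refine Set.infinite_of_injective_forall_mem
          (f := fun k : ℕ =>
            algebraMap (Polynomial ℚ) (FractionRing (Polynomial ℚ)) ((k : Polynomial ℚ) * X))
          ?_ ?_
        · intro a b hab
          have h2 : (a : Polynomial ℚ) * X = (b : Polynomial ℚ) * X := hg hab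
          have h3 : (a : Polynomial ℚ) = (b : Polynomial ℚ) :=
            mul_right_cancel₀ Polynomial.X_ne_zero h2
          exact_mod_cast h3
        · intro k
          show Polynomial.IsRoot _ _
          rw [Polynomial.IsRoot, Polynomial.eval_map, Polynomial.eval₂_at_apply, hevalDP,
            hroots k, map_zero]
      have := congrArg (Polynomial.map (algebraMap (Polynomial ℚ) (FractionRing (Polynomial ℚ))))
        (rfl : DP = DP)
      exact Polynomial.map_injective _ hg (by rw [hmap, Polynomial.map_zero])
    intro x
    have hx : D x = 0 := by rw [← hevalDP x, hDP0]; simp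
    exact sub_eq_zero.mp hx

lemma Acal_conv_q (n : ℕ) (q : ℚ) :
    ∑ k ∈ Finset.range (n + 1),
        ((n.choose k : ℕ) : ℚ) * Acal 1 (1 - q) k 1 * Acal 1 (1 - q) (n - k) 1
      = Acal 1 (1 - q) n 2 := by
  have h := Acal_conv 1 1 n 1
  have h2 := congrArg (Polynomial.evalRingHom (1 - q)) h
  simp only [map_sum, map_mul, map_natCast, Acal_map, map_add, coe_evalRingHom,
    eval_X, eval_one, map_one] at h2
  norm_num at h2
  convert h2 using 2

/-- `P m q = ∏_{j=1}^{m-1} (j + 1 + q (m - j))`; in particular `P 0 q = P 1 q = 1`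
(empty products). This is the generating polynomial `M(A_m, q)` counting maximal
chains of noncrossing partitions of type `A_m` weighted by the
non-interval-refinement statistic. -/
def P (m : ℕ) (q : ℚ) : ℚ :=
  ∏ j ∈ Finset.Icc 1 (m - 1), ((j : ℚ) + 1 + q * ((m : ℚ) - (j : ℚ)))

lemma P_eq (m : ℕ) (q : ℚ) : P m q = Acal 1 (1 - q) m 1 := by
  cases m with
  | zero => simp [P, Acal]
  | succ n =>
    show ∏ j ∈ Finset.Icc 1 (n + 1 - 1), ((j : ℚ) + 1 + q * (((n+1 : ℕ) : ℚ) - (j : ℚ)))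
        = 1 * ∏ i ∈ Finset.range n, (1 + ((n : ℚ) + 1) * 1 - ((i : ℚ) + 1) * (1 - q))
    rw [one_mul, Nat.add_sub_cancel, show Finset.Icc 1 n = Finset.Ico 1 (n+1) by rfl,
      Finset.prod_Ico_eq_prod_range]
    simp only [Nat.add_sub_cancel]
    rw [← Finset.prod_range_reflect]
    apply Finset.prod_congr rfl
    intro i hi
    have hin : i < n := Finset.mem_range.mp hi
    have h1 : ((n - 1 - i : ℕ) : ℚ) = (n : ℚ) - 1 - (i : ℚ) := by
      have : n - 1 - i = n - (1 + i) := by omega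
      rw [this, Nat.cast_sub (by omega)]
      push_cast; ring
    push_cast [h1]
    ring

lemma P_succ_acal (m : ℕ) (q : ℚ) :
    P (m + 1) q = (1 + q * (m : ℚ) / 2) * Acal 1 (1 - q) m 2 := by
  cases m with
  | zero => simp [P, Acal]
  | succ m =>
    rw [P_eq]
    show (1:ℚ) * ∏ i ∈ Finset.range (m+1), (1 + (((m+1:ℕ):ℚ) + 1) * 1 - ((i:ℚ)+1)*(1-q))
        = (1 + q * (((m+1:ℕ)):ℚ) / 2)
            * ((2:ℚ) * ∏ i ∈ Finset.range m, (2 + ((m:ℚ)+1)*1 - ((i:ℚ)+1)*(1-q)))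
    rw [one_mul, Finset.prod_range_succ]
    have hp : ∏ i ∈ Finset.range m, (1 + (((m+1:ℕ):ℚ) + 1) * 1 - ((i:ℚ)+1)*(1-q))
        = ∏ i ∈ Finset.range m, (2 + ((m:ℚ)+1)*1 - ((i:ℚ)+1)*(1-q)) := by
      apply Finset.prod_congr rfl; intro i _; push_cast; ring
    rw [hp]
    push_cast
    ring

/-- `P n q = (1 + q(n-1)/2) · Σ_{k=0}^{n-1} C(n-1, k) · P k q · P (n-1-k) q`. -/
theorem stmt15 (n : ℕ) (hn : 1 ≤ n) (q : ℚ) :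
    P n q = (1 + q * ((n : ℚ) - 1) / 2) *
        ∑ k ∈ Finset.range n, ((n - 1).choose k : ℚ) * P k q * P (n - 1 - k) q := by
  obtain ⟨m, rfl⟩ : ∃ m, n = m + 1 := ⟨n - 1, by omega⟩
  have hc := Acal_conv_q m q
  have hsum : ∑ k ∈ Finset.range (m + 1), ((m + 1 - 1).choose k : ℚ) * P k q * P (m + 1 - 1 - k) q
      = Acal 1 (1 - q) m 2 := by
    rw [← hc]
    apply Finset.sum_congr rfl
    intro k _
    simp only [Nat.add_sub_cancel]
    rw [P_eq, P_eq]
  rw [hsum, P_succ_acal]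
  push_cast
  ring
end
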